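/- arXiv:2408.07254 — 4 statements merged into one kernel-verified Lean document; each statement's English description precedes it below -/
import Mathlib

section
/- Let (W, τ) be a probability space and let f : W → ℝ be a bounded measurable function. Define the probability measure μ* on W by dμ*/dτ = e^f / ∫ e^f dτ. Then KL(μ* ‖ τ) ≤ ∫ f dμ* − ∫ f dτ ≤ osc(f), where osc(f) := sup f − inf f. -/
/-!
The density of `μ*` has logarithm `f - log Z`, so `KL(μ* ‖ τ) = ∫ f dμ* - log Z`, and Jensen's
inequality for `exp` gives `∫ f dτ ≤ log Z`. The second inequality holds for any two probability
measures, since each integral of `f` lies between `inf f` and `sup f`.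
-/

open MeasureTheory Real

namespace MeasureTheory

variable {α : Type*} [MeasurableSpace α] {μ ν : Measure α} [IsProbabilityMeasure μ]
  [IsProbabilityMeasure ν] {f : α → ℝ}

lemma integral_le_log_integral_exp (hf : Integrable f μ)
    (hexp : Integrable (fun x ↦ exp (f x)) μ) : ∫ x, f x ∂μ ≤ log (∫ x, exp (f x) ∂μ) :=
  (le_log_iff_exp_le (integral_exp_pos hexp)).2 <|
    convexOn_exp.map_integral_le continuous_exp.continuousOn isClosed_univ
      (ae_of_all _ fun _ ↦ trivial) hf hexp

lemma integral_log_exp_div (hf : Integrable f μ) {Z : ℝ} (hZ : Z ≠ 0) :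
    ∫ x, log (exp (f x) / Z) ∂μ = ∫ x, f x ∂μ - log Z := by
  simp_rw [log_div (exp_ne_zero _) hZ, log_exp]
  simp [integral_sub hf (integrable_const _)]

lemma integral_log_exp_div_integral_exp_le (hfμ : Integrable f μ) (hfν : Integrable f ν)
    (hexp : Integrable (fun x ↦ exp (f x)) μ) :
    ∫ x, log (exp (f x) / ∫ y, exp (f y) ∂μ) ∂ν ≤ ∫ x, f x ∂ν - ∫ x, f x ∂μ := by
  rw [integral_log_exp_div hfν (integral_exp_pos hexp).ne']
  linarith [integral_le_log_integral_exp hfμ hexp]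

lemma integral_le_ciSup (hf : Integrable f μ) (hbdd : BddAbove (Set.range f)) :
    ∫ x, f x ∂μ ≤ ⨆ x, f x :=
  calc ∫ x, f x ∂μ ≤ ∫ _, (⨆ x, f x) ∂μ :=
        integral_mono hf (integrable_const _) fun x ↦ le_ciSup hbdd x
    _ = ⨆ x, f x := by simp

lemma ciInf_le_integral (hf : Integrable f μ) (hbdd : BddBelow (Set.range f)) :
    ⨅ x, f x ≤ ∫ x, f x ∂μ :=
  calc ⨅ x, f x = ∫ _, (⨅ x, f x) ∂μ := by simp
    _ ≤ ∫ x, f x ∂μ := integral_mono (integrable_const _) hf fun x ↦ ciInf_le hbdd x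

lemma integral_sub_integral_le_ciSup_sub_ciInf (hfμ : Integrable f μ) (hfν : Integrable f ν)
    (hbdd : BddAbove (Set.range f)) (hbdd' : BddBelow (Set.range f)) :
    ∫ x, f x ∂ν - ∫ x, f x ∂μ ≤ (⨆ x, f x) - ⨅ x, f x :=
  sub_le_sub (integral_le_ciSup hfν hbdd) (ciInf_le_integral hfμ hbdd')

end MeasureTheory

theorem stmt3_general {W : Type*} [MeasurableSpace W]
    (τ : Measure W) [IsProbabilityMeasure τ]
    (f : W → ℝ) (hf : Measurable f) (B : ℝ) (hB : ∀ w, |f w| ≤ B)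
    (Z : ℝ) (hZ : Z = ∫ w, Real.exp (f w) ∂τ)
    (μstar : Measure W)
    (hμ : μstar = τ.withDensity fun w => ENNReal.ofReal (Real.exp (f w) / Z)) :
    -- `KL(μ* ‖ τ) = ∫ log (dμ*/dτ) dμ*` with density ratio `e^f / Z`
    (∫ w, Real.log (Real.exp (f w) / Z) ∂μstar ≤ (∫ w, f w ∂μstar) - ∫ w, f w ∂τ) ∧
      (∫ w, f w ∂μstar) - (∫ w, f w ∂τ) ≤ (⨆ w, f w) - ⨅ w, f w := by
  have hexp : Integrable (fun w ↦ exp (f w)) τ :=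
    .of_bound hf.exp.aestronglyMeasurable (exp B) <| ae_of_all _ fun w ↦ by
      simpa using (abs_le.1 (hB w)).2
  have : IsProbabilityMeasure μstar := hμ ▸ hZ ▸ isProbabilityMeasure_tilted hexp
  have hfτ : Integrable f τ := .of_bound hf.aestronglyMeasurable B (ae_of_all _ hB)
  have hfμ : Integrable f μstar := .of_bound hf.aestronglyMeasurable B (ae_of_all _ hB)
  subst hZ
  exact ⟨integral_log_exp_div_integral_exp_le hfτ hfμ hexp,
    integral_sub_integral_le_ciSup_sub_ciInf hfτ hfμ
      ⟨B, Set.forall_mem_range.2 fun w ↦ (abs_le.1 (hB w)).2⟩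
      ⟨-B, Set.forall_mem_range.2 fun w ↦ (abs_le.1 (hB w)).1⟩⟩

/-- Proposition: entropy bound for exponential tilts.
If `dμ*/dτ = e^f / ∫ e^f dτ`, then `KL(μ* ‖ τ) ≤ ∫ f dμ* − ∫ f dτ ≤ osc(f)`. -/
theorem stmt3 {W : Type*} [MeasurableSpace W] [Nonempty W]
    (τ : Measure W) [IsProbabilityMeasure τ]
    (f : W → ℝ) (hf : Measurable f) (B : ℝ) (hB : ∀ w, |f w| ≤ B)
    (Z : ℝ) (hZ : Z = ∫ w, Real.exp (f w) ∂τ)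
    (μstar : Measure W)
    (hμ : μstar = τ.withDensity fun w => ENNReal.ofReal (Real.exp (f w) / Z)) :
    -- `KL(μ* ‖ τ) = ∫ log (dμ*/dτ) dμ*` with density ratio `e^f / Z`
    (∫ w, Real.log (Real.exp (f w) / Z) ∂μstar ≤ (∫ w, f w ∂μstar) - ∫ w, f w ∂τ) ∧
      (∫ w, f w ∂μstar) - (∫ w, f w ∂τ) ≤ (⨆ w, f w) - ⨅ w, f w :=
  stmt3_general τ f hf B hB Z hZ μstar hμ
end

section
/- Let D ∈ ℕ, σ > 0, and let γ be the centered Gaussian measure on ℝ^D with covariance σ² I_D. Then for every probability measure μ on ℝ^D with finite second moment, KL(μ ∗ γ ‖ γ) ≤ (1/(2σ²)) ∫ ‖w‖² dμ(w), where μ ∗ γ is the convolution of μ and γ. -/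
open MeasureTheory Real

noncomputable section

/-- squared Euclidean norm of a plain vector -/
def vnormSq {m : ℕ} (v : Fin m → ℝ) : ℝ := ∑ j, v j ^ 2

/-- Kullback–Leibler divergence `KL(μ ‖ ν) = ∫ ln(dμ/dν) dμ`. -/
def KLdiv {W : Type*} [MeasurableSpace W] (μ ν : Measure W) : ℝ :=
  ∫ w, Real.log ((μ.rnDeriv ν w).toReal) ∂μ

open scoped ENNReal

namespace Stmt10Aux

variable {D : ℕ} {σ : ℝ}

def c (σ t : ℝ) : ℝ := (2 * π * σ ^ 2) ^ (-(1:ℝ)/2) * Real.exp (-(t^2) / (2 * σ ^ 2))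

def dens (D : ℕ) (σ : ℝ) (x : Fin D → ℝ) : ℝ :=
  (2 * π * σ ^ 2) ^ (-(D : ℝ) / 2) * Real.exp (-vnormSq x / (2 * σ ^ 2))

lemma tps_pos (hσ : 0 < σ) : 0 < 2 * π * σ ^ 2 := by positivity

lemma c_pos (hσ : 0 < σ) (t : ℝ) : 0 < c σ t :=
  mul_pos (Real.rpow_pos_of_pos (tps_pos hσ) _) (Real.exp_pos _)

lemma dens_pos (hσ : 0 < σ) (x : Fin D → ℝ) : 0 < dens D σ x :=
  mul_pos (Real.rpow_pos_of_pos (tps_pos hσ) _) (Real.exp_pos _)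

lemma measurable_vnormSq : Measurable (vnormSq (m := D)) := by
  unfold vnormSq; fun_prop

lemma measurable_dens : Measurable (dens D σ) :=
  (measurable_const.mul (((measurable_vnormSq.neg).div_const _).exp))

lemma dens_eq_prod (hσ : 0 < σ) (x : Fin D → ℝ) : dens D σ x = ∏ j, c σ (x j) := by
  unfold dens c vnormSq
  rw [Finset.prod_mul_distrib, Finset.prod_const, ← Real.exp_sum]
  congr 1
  · rw [← Real.rpow_natCast ((2*π*σ^2) ^ (-(1:ℝ)/2)) (Finset.univ.card),
      ← Real.rpow_mul (tps_pos hσ).le]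
    norm_num
    ring_nf
  · rw [← Finset.sum_div, ← Finset.sum_neg_distrib]

lemma integrable_c (hσ : 0 < σ) : Integrable (c σ) := by
  have hb : 0 < (2 * σ ^ 2)⁻¹ := by positivity
  have : c σ = fun t => (2 * π * σ ^ 2) ^ (-(1:ℝ)/2) * Real.exp (-(2 * σ ^ 2)⁻¹ * t ^ 2) := by
    funext t; unfold c; congr 1; ring_nf
  rw [this]
  exact (integrable_exp_neg_mul_sq hb).const_mul _

lemma integral_c (hσ : 0 < σ) : ∫ t, c σ t = 1 := by
  have hb : 0 < (2 * σ ^ 2)⁻¹ := by positivity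
  have h1 : (fun t => c σ t) = fun t => (2 * π * σ ^ 2) ^ (-(1:ℝ)/2) * Real.exp (-(2 * σ ^ 2)⁻¹ * t ^ 2) := by
    funext t; unfold c; congr 1; ring_nf
  rw [h1, integral_const_mul, integral_gaussian]
  have h2 : π / (2 * σ ^ 2)⁻¹ = 2 * π * σ ^ 2 := by field_simp
  rw [h2, Real.sqrt_eq_rpow, ← Real.rpow_add (tps_pos hσ)]
  norm_num

lemma integrable_mul_c (hσ : 0 < σ) : Integrable (fun t => c σ t * t) := by
  have hb : 0 < (2 * σ ^ 2)⁻¹ := by positivity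
  have : (fun t => c σ t * t) = fun t => (2 * π * σ ^ 2) ^ (-(1:ℝ)/2) * (t * Real.exp (-(2 * σ ^ 2)⁻¹ * t ^ 2)) := by
    funext t; unfold c; ring_nf
  rw [this]
  exact (integrable_mul_exp_neg_mul_sq hb).const_mul _

lemma integral_mul_c (hσ : 0 < σ) : ∫ t, c σ t * t = 0 := by
  have hodd : ∀ t : ℝ, c σ (-t) * (-t) = -(c σ t * t) := by
    intro t; unfold c; rw [neg_sq]; ring
  have h := integral_neg_eq_self (fun t => c σ t * t) (volume : Measure ℝ)
  simp only [hodd, integral_neg] at h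
  linarith

/-- relative density of the `w`-shifted Gaussian -/
def fw (σ : ℝ) (w x : Fin D → ℝ) : ℝ :=
  Real.exp ((2 * ∑ j, x j * w j - vnormSq w) / (2 * σ ^ 2))

lemma fw_pos (w x : Fin D → ℝ) : 0 < fw σ w x := Real.exp_pos _

lemma measurable_fw : Measurable (fun p : (Fin D → ℝ) × (Fin D → ℝ) => fw σ p.1 p.2) := by
  apply Real.measurable_exp.comp
  apply Measurable.div_const
  apply Measurable.sub
  · apply Measurable.const_mul
    exact Finset.measurable_sum _ fun j _ =>
      ((measurable_pi_apply j).comp measurable_snd).mul ((measurable_pi_apply j).comp measurable_fst)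
  · exact measurable_vnormSq.comp measurable_fst

lemma vnormSq_sub (x w : Fin D → ℝ) :
    vnormSq (x - w) = vnormSq x - 2 * (∑ j, x j * w j) + vnormSq w := by
  unfold vnormSq
  rw [Finset.mul_sum, ← Finset.sum_sub_distrib, ← Finset.sum_add_distrib]
  exact Finset.sum_congr rfl fun j _ => by simp [Pi.sub_apply]; ring

lemma dens_sub (hσ : 0 < σ) (w x : Fin D → ℝ) :
    dens D σ (x - w) = fw σ w x * dens D σ x := by
  unfold dens fw
  rw [mul_left_comm]
  congr 1
  rw [← Real.exp_add, vnormSq_sub]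
  congr 1
  field_simp
  ring

/-- the Gaussian measure -/
def gm (D : ℕ) (σ : ℝ) : Measure (Fin D → ℝ) :=
  volume.withDensity fun x => ENNReal.ofReal (dens D σ x)

lemma integrable_dens (hσ : 0 < σ) : Integrable (dens D σ) := by
  have : dens D σ = fun x => ∏ j, c σ (x j) := funext (dens_eq_prod hσ)
  rw [this]
  exact Integrable.fintype_prod (fun _ => integrable_c hσ)

lemma integral_dens (hσ : 0 < σ) : ∫ x, dens D σ x = 1 := by
  have : dens D σ = fun x => ∏ j, c σ (x j) := funext (dens_eq_prod hσ)
  rw [this, integral_fintype_prod_volume_eq_prod (f := fun _ : Fin D => c σ)]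
  simp [integral_c hσ]

instance : SigmaFinite (volume : Measure (Fin D → ℝ)) := by infer_instance

lemma gm_prob (hσ : 0 < σ) : IsProbabilityMeasure (gm D σ) := by
  constructor
  rw [gm, withDensity_apply _ MeasurableSet.univ, setLIntegral_univ,
    ← ofReal_integral_eq_lintegral_ofReal (integrable_dens hσ)
      (ae_of_all _ fun x => (dens_pos hσ x).le),
    integral_dens hσ]
  simp

lemma gm_ac : gm D σ ≪ (volume : Measure (Fin D → ℝ)) :=
  withDensity_absolutelyContinuous _ _

lemma ac_gm (hσ : 0 < σ) : (volume : Measure (Fin D → ℝ)) ≪ gm D σ :=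
  withDensity_absolutelyContinuous' (measurable_dens.ennreal_ofReal).aemeasurable
    (ae_of_all _ fun x => (ENNReal.ofReal_pos.mpr (dens_pos hσ x)).ne')

set_option maxHeartbeats 1000000 in
lemma lintegral_shift (hσ : 0 < σ) (w : Fin D → ℝ) {F : (Fin D → ℝ) → ℝ≥0∞}
    (hF : Measurable F) :
    ∫⁻ y, F (w + y) ∂(gm D σ) = ∫⁻ x, ENNReal.ofReal (fw σ w x) * F x ∂(gm D σ) := by
  have hd : Measurable fun x : Fin D → ℝ => ENNReal.ofReal (dens D σ x) :=
    measurable_dens.ennreal_ofReal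
  have hfwm : Measurable fun x => fw σ w x := by
    unfold fw
    exact Real.measurable_exp.comp ((((Finset.measurable_sum Finset.univ fun j _ =>
      (measurable_pi_apply j : Measurable fun x : Fin D → ℝ => x j).mul_const (w j)).const_mul 2).sub measurable_const).div_const _)
  have hc : Measurable fun y : Fin D → ℝ => F (w + y) := hF.comp (measurable_const_add w)
  have hc2 : Measurable fun x => ENNReal.ofReal (fw σ w x) * F x := hfwm.ennreal_ofReal.mul hF
  have hc3 : Measurable fun x : Fin D → ℝ => ENNReal.ofReal (dens D σ (x - w)) * F x :=
    ((measurable_dens.comp (measurable_id.sub_const w)).ennreal_ofReal).mul hF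
  have h1 : ∫⁻ y, F (w + y) ∂(gm D σ)
      = ∫⁻ y, ENNReal.ofReal (dens D σ y) * F (w + y) := by
    rw [gm, lintegral_withDensity_eq_lintegral_mul volume hd hc]
    simp only [Pi.mul_apply]
  have h2 : ∫⁻ x, ENNReal.ofReal (fw σ w x) * F x ∂(gm D σ)
      = ∫⁻ x, ENNReal.ofReal (dens D σ x) * (ENNReal.ofReal (fw σ w x) * F x) := by
    rw [gm, lintegral_withDensity_eq_lintegral_mul volume hd hc2]
    simp only [Pi.mul_apply]
  rw [h1, h2]
  have h3 : ∫⁻ y, ENNReal.ofReal (dens D σ y) * F (w + y)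
      = ∫⁻ x, ENNReal.ofReal (dens D σ (x - w)) * F x := by
    have hmp := measurePreserving_add_left (volume : Measure (Fin D → ℝ)) w
    have := hmp.lintegral_comp (f := fun x => ENNReal.ofReal (dens D σ (x - w)) * F x) hc3
    rw [← this]
    simp
  rw [h3]
  congr 1
  funext x
  rw [dens_sub hσ w x, ENNReal.ofReal_mul (fw_pos w x).le]
  ring



lemma measurable_fw_left (w : Fin D → ℝ) : Measurable (fw σ w) := by
  unfold fw
  exact Real.measurable_exp.comp ((((Finset.measurable_sum Finset.univ fun j _ =>
    (measurable_pi_apply j : Measurable fun x : Fin D → ℝ => x j).mul_const (w j)).const_mul 2).sub measurable_const).div_const _)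

lemma coord_mul_dens (hσ : 0 < σ) (j : Fin D) (y : Fin D → ℝ) :
    y j * dens D σ y
      = ∏ i, Function.update (fun _ : Fin D => c σ) j (fun t => c σ t * t) i (y i) := by
  set h := Function.update (fun _ : Fin D => c σ) j (fun t => c σ t * t) with hh
  rw [dens_eq_prod hσ,
    ← Finset.mul_prod_erase Finset.univ (fun i => h i (y i)) (Finset.mem_univ j),
    ← Finset.mul_prod_erase Finset.univ (fun i => c σ (y i)) (Finset.mem_univ j)]
  have h1 : h j (y j) = c σ (y j) * y j := by rw [hh]; simp
  have h2 : ∏ i ∈ Finset.univ.erase j, h i (y i) = ∏ i ∈ Finset.univ.erase j, c σ (y i) :=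
    Finset.prod_congr rfl fun i hi => by
      rw [hh, Function.update_of_ne (Finset.mem_erase.mp hi).1]
  rw [h1, h2]; ring

lemma integrable_update (hσ : 0 < σ) (j i : Fin D) :
    Integrable (Function.update (fun _ : Fin D => c σ) j (fun t => c σ t * t) i) := by
  rcases eq_or_ne i j with rfl | hij
  · simpa using integrable_mul_c hσ
  · simpa [Function.update_of_ne hij] using integrable_c hσ

lemma integrable_coord (hσ : 0 < σ) (j : Fin D) : Integrable (fun y => y j) (gm D σ) := by
  rw [gm]
  rw [integrable_withDensity_iff measurable_dens.ennreal_ofReal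
    (ae_of_all _ fun x => ENNReal.ofReal_lt_top)]
  have : (fun y : Fin D → ℝ => y j * (ENNReal.ofReal (dens D σ y)).toReal)
      = fun y => ∏ i, Function.update (fun _ : Fin D => c σ) j (fun t => c σ t * t) i (y i) := by
    funext y
    rw [ENNReal.toReal_ofReal (dens_pos hσ y).le, coord_mul_dens hσ j y]
  rw [this]
  exact Integrable.fintype_prod fun i => integrable_update hσ j i

lemma integral_coord (hσ : 0 < σ) (j : Fin D) : ∫ y, y j ∂(gm D σ) = 0 := by
  have hgm : gm D σ = volume.withDensity fun x => ((dens D σ x).toNNReal : ENNReal) := rfl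
  rw [hgm, integral_withDensity_eq_integral_smul measurable_dens.real_toNNReal]
  have : (fun y : Fin D → ℝ => (dens D σ y).toNNReal • y j)
      = fun y => ∏ i, Function.update (fun _ : Fin D => c σ) j (fun t => c σ t * t) i (y i) := by
    funext y
    rw [← coord_mul_dens hσ j y]
    simp [NNReal.smul_def, Real.coe_toNNReal _ (dens_pos hσ y).le, mul_comm]
  rw [this, integral_fintype_prod_volume_eq_prod]
  apply Finset.prod_eq_zero (Finset.mem_univ j)
  simp only [Function.update_self]
  exact integral_mul_c hσ

lemma integrable_coord_mu (j : Fin D) {μ : Measure (Fin D → ℝ)} [IsProbabilityMeasure μ]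
    (hμ2 : Integrable (fun w => vnormSq w) μ) : Integrable (fun w => w j) μ := by
  refine Integrable.mono' ((integrable_const 1).add hμ2)
    (measurable_pi_apply j).aestronglyMeasurable (ae_of_all _ fun w => ?_)
  have h1 : w j ^ 2 ≤ vnormSq w :=
    Finset.single_le_sum (f := fun i => w i ^ 2) (fun i _ => sq_nonneg _) (Finset.mem_univ j)
  have h2 : |w j| ≤ 1 + w j ^ 2 := by nlinarith [abs_nonneg (w j), sq_abs (w j)]
  simpa [Real.norm_eq_abs] using h2.trans (by linarith)

theorem main (D : ℕ) (σ : ℝ) (hσ : 0 < σ) (μ : Measure (Fin D → ℝ))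
    [IsProbabilityMeasure μ] (hμ2 : Integrable (fun w => vnormSq w) μ) :
    KLdiv ((μ.prod (gm D σ)).map fun p => p.1 + p.2) (gm D σ)
      ≤ (1 / (2 * σ ^ 2)) * ∫ w, vnormSq w ∂μ := by
  haveI hPγ : IsProbabilityMeasure (gm D σ) := gm_prob hσ
  have hadd : Measurable fun p : (Fin D → ℝ) × (Fin D → ℝ) => p.1 + p.2 :=
    measurable_fst.add measurable_snd
  set ν := (μ.prod (gm D σ)).map (fun p => p.1 + p.2) with hν
  haveI : IsProbabilityMeasure ν := Measure.isProbabilityMeasure_map hadd.aemeasurable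
  have hRHS0 : 0 ≤ ∫ w, vnormSq w ∂μ :=
    integral_nonneg fun w => Finset.sum_nonneg fun j _ => sq_nonneg _
  by_cases hInt : Integrable (fun x => Real.log ((ν.rnDeriv (gm D σ) x).toReal)) ν
  swap
  · rw [KLdiv, integral_undef hInt]
    exact mul_nonneg (by positivity) hRHS0
  have hAC : ν ≪ gm D σ := by
    refine Measure.AbsolutelyContinuous.mk fun s hs hγs => ?_
    rw [hν, Measure.map_apply hadd hs, Measure.prod_apply (hadd hs)]
    have hz : ∀ w : Fin D → ℝ,
        (gm D σ) (Prod.mk w ⁻¹' ((fun p : (Fin D → ℝ) × (Fin D → ℝ) => p.1 + p.2) ⁻¹' s)) = 0 := by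
      intro w
      have hvs : (volume : Measure (Fin D → ℝ)) s = 0 := ac_gm hσ hγs
      have hpre : Prod.mk w ⁻¹' ((fun p : (Fin D → ℝ) × (Fin D → ℝ) => p.1 + p.2) ⁻¹' s)
          = (fun y => w + y) ⁻¹' s := rfl
      rw [hpre]
      refine gm_ac ?_
      rw [(measurePreserving_add_left (volume : Measure (Fin D → ℝ)) w).measure_preimage
        hs.nullMeasurableSet]
      exact hvs
    simp [hz]
  set G := ν.rnDeriv (gm D σ) with hG
  have hGmeas : Measurable G := Measure.measurable_rnDeriv _ _
  have hG1 : ∫⁻ x, G x ∂(gm D σ) = 1 := by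
    rw [hG, Measure.lintegral_rnDeriv hAC]; exact measure_univ
  have hGlt : ∀ᵐ x ∂(gm D σ), G x < ∞ := Measure.rnDeriv_lt_top _ _
  have hwd : (gm D σ).withDensity G = ν := Measure.withDensity_rnDeriv_eq _ _ hAC
  set L := fun x => Real.log ((G x).toReal) with hL
  have hLmeas : Measurable L := Real.measurable_log.comp hGmeas.ennreal_toReal
  set A := fun p : (Fin D → ℝ) × (Fin D → ℝ) =>
    (vnormSq p.1 + 2 * ∑ j, p.2 j * p.1 j) / (2 * σ ^ 2) with hA
  set B := fun p : (Fin D → ℝ) × (Fin D → ℝ) =>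
    (G (p.1 + p.2)).toReal / fw σ p.1 (p.1 + p.2) with hB
  have hfwp : Measurable fun p : (Fin D → ℝ) × (Fin D → ℝ) => fw σ p.1 (p.1 + p.2) := by
    unfold fw
    apply Real.measurable_exp.comp
    apply Measurable.div_const
    apply Measurable.sub
    · apply Measurable.const_mul
      apply Finset.measurable_sum
      intro j _
      exact ((measurable_pi_apply j).comp hadd).mul ((measurable_pi_apply j).comp measurable_fst)
    · exact measurable_vnormSq.comp measurable_fst
  have hBmeas : Measurable B := (hGmeas.comp hadd).ennreal_toReal.div hfwp
  -- null sets
  have hms0 : MeasurableSet {x : Fin D → ℝ | G x = 0} := hGmeas (measurableSet_singleton 0)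
  have hmstop : MeasurableSet {x : Fin D → ℝ | G x = ∞} := hGmeas (measurableSet_singleton ∞)
  have hν0 : ν {x | G x = 0} = 0 := by
    have h0 : ∫⁻ x in {x | G x = 0}, G x ∂(gm D σ) = ∫⁻ _ in {x | G x = 0}, 0 ∂(gm D σ) :=
      setLIntegral_congr_fun hms0 (fun x hx => hx)
    rw [← hwd, withDensity_apply _ hms0, h0, lintegral_zero]
  have hνtop : ν {x | G x = ∞} = 0 := by
    apply hAC
    refine measure_mono_null (fun x hx => ?_) (ae_iff.mp hGlt)
    simp only [Set.mem_setOf_eq] at hx ⊢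
    exact not_lt.mpr (le_of_eq hx.symm)
  have hνN : ν {x | G x = 0 ∨ G x = ∞} = 0 := by
    rw [Set.setOf_or]
    exact measure_union_null hν0 hνtop
  have hprodN : (μ.prod (gm D σ)) {p | G (p.1 + p.2) = 0 ∨ G (p.1 + p.2) = ∞} = 0 := by
    have hpre : {p : (Fin D → ℝ) × (Fin D → ℝ) | G (p.1 + p.2) = 0 ∨ G (p.1 + p.2) = ∞}
        = (fun p : (Fin D → ℝ) × (Fin D → ℝ) => p.1 + p.2) ⁻¹' {x | G x = 0 ∨ G x = ∞} := rfl
    rw [hpre, ← Measure.map_apply hadd (by rw [Set.setOf_or]; exact hms0.union hmstop), ← hν]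
    exact hνN
  have haeOK : ∀ᵐ p ∂(μ.prod (gm D σ)),
      p ∉ {q : (Fin D → ℝ) × (Fin D → ℝ) | G (q.1 + q.2) = 0 ∨ G (q.1 + q.2) = ∞} :=
    measure_eq_zero_iff_ae_notMem.mp hprodN
  have hae : ∀ᵐ p ∂(μ.prod (gm D σ)), L (p.1 + p.2) ≤ A p + B p - 1 := by
    filter_upwards [haeOK] with p hp
    push_neg at hp
    obtain ⟨h0, htop⟩ := hp
    have hgpos : 0 < (G (p.1 + p.2)).toReal := ENNReal.toReal_pos h0 htop
    have hfwpos := fw_pos (σ := σ) p.1 (p.1 + p.2)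
    have hAeq : Real.log (fw σ p.1 (p.1 + p.2)) = A p := by
      rw [hA]
      simp only [fw, Real.log_exp]
      have hsum : ∑ j, (p.1 + p.2) j * p.1 j = vnormSq p.1 + ∑ j, p.2 j * p.1 j := by
        unfold vnormSq
        rw [← Finset.sum_add_distrib]
        exact Finset.sum_congr rfl fun j _ => by simp only [Pi.add_apply]; ring
      rw [hsum]; ring
    have hcancel : fw σ p.1 (p.1 + p.2) * ((G (p.1 + p.2)).toReal / fw σ p.1 (p.1 + p.2))
        = (G (p.1 + p.2)).toReal := by field_simp
    have hsplit : L (p.1 + p.2)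
        = Real.log (fw σ p.1 (p.1 + p.2))
          + Real.log ((G (p.1 + p.2)).toReal / fw σ p.1 (p.1 + p.2)) := by
      rw [hL]
      rw [← Real.log_mul hfwpos.ne' (ne_of_gt (div_pos hgpos hfwpos)), hcancel]
    have hlog_le : Real.log ((G (p.1 + p.2)).toReal / fw σ p.1 (p.1 + p.2))
        ≤ (G (p.1 + p.2)).toReal / fw σ p.1 (p.1 + p.2) - 1 :=
      Real.log_le_sub_one_of_pos (div_pos hgpos hfwpos)
    have hBp : B p = (G (p.1 + p.2)).toReal / fw σ p.1 (p.1 + p.2) := rfl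
    rw [hsplit, hAeq, hBp]
    linarith
  -- integrability of A
  have hIntA1 : Integrable (fun p : (Fin D → ℝ) × (Fin D → ℝ) => vnormSq p.1)
      (μ.prod (gm D σ)) := by
    have h := hμ2.mul_prod (integrable_const (1 : ℝ) (μ := gm D σ))
    simpa using h
  have hIntterm : ∀ j : Fin D, Integrable (fun p : (Fin D → ℝ) × (Fin D → ℝ) => p.2 j * p.1 j)
      (μ.prod (gm D σ)) := by
    intro j
    have h := (integrable_coord_mu j hμ2).mul_prod (integrable_coord hσ j)
    simpa [mul_comm] using h
  have hIntA2 : Integrable (fun p : (Fin D → ℝ) × (Fin D → ℝ) => ∑ j, p.2 j * p.1 j)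
      (μ.prod (gm D σ)) := integrable_finset_sum _ fun j _ => hIntterm j
  have hIntA : Integrable A (μ.prod (gm D σ)) := by
    rw [hA]
    exact (hIntA1.add (hIntA2.const_mul 2)).div_const _
  -- B
  have hBnonneg : ∀ p, 0 ≤ B p := fun p => div_nonneg ENNReal.toReal_nonneg (fw_pos _ _).le
  have hlB : ∫⁻ p, ENNReal.ofReal (B p) ∂(μ.prod (gm D σ)) = 1 := by
    rw [lintegral_prod _ hBmeas.ennreal_ofReal.aemeasurable]
    have inner : ∀ w, ∫⁻ y, ENNReal.ofReal (B (w, y)) ∂(gm D σ) = 1 := by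
      intro w
      have hFmeas : Measurable fun x => ENNReal.ofReal ((G x).toReal / fw σ w x) :=
        (hGmeas.ennreal_toReal.div (measurable_fw_left w)).ennreal_ofReal
      have h1 : ∫⁻ y, ENNReal.ofReal (B (w, y)) ∂(gm D σ)
          = ∫⁻ y, (fun x => ENNReal.ofReal ((G x).toReal / fw σ w x)) (w + y) ∂(gm D σ) := rfl
      rw [h1, lintegral_shift hσ w hFmeas]
      have h2 : ∀ x, ENNReal.ofReal (fw σ w x)
            * ENNReal.ofReal ((G x).toReal / fw σ w x)
          = ENNReal.ofReal ((G x).toReal) := by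
        intro x
        rw [← ENNReal.ofReal_mul (fw_pos w x).le]
        congr 1
        rw [← mul_div_assoc, mul_comm, mul_div_assoc, div_self (fw_pos w x).ne', mul_one]
      rw [lintegral_congr h2,
        lintegral_congr_ae (hGlt.mono fun x hx => by rw [ENNReal.ofReal_toReal hx.ne])]
      exact hG1
    simp only [inner]
    simp
  have hIntB : Integrable B (μ.prod (gm D σ)) := by
    refine ⟨hBmeas.aestronglyMeasurable, ?_⟩
    rw [hasFiniteIntegral_iff_ofReal (ae_of_all _ hBnonneg), hlB]
    exact ENNReal.one_lt_top
  have hBval : ∫ p, B p ∂(μ.prod (gm D σ)) = 1 := by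
    rw [integral_eq_lintegral_of_nonneg_ae (ae_of_all _ hBnonneg) hBmeas.aestronglyMeasurable,
      hlB]
    simp
  -- transfer KL to the product space
  have hInt' : Integrable L ((μ.prod (gm D σ)).map fun p : (Fin D → ℝ) × (Fin D → ℝ) => p.1 + p.2) := by
    rw [← hν]; exact hInt
  have hIntL : Integrable (fun p : (Fin D → ℝ) × (Fin D → ℝ) => L (p.1 + p.2))
      (μ.prod (gm D σ)) := by
    have h := (integrable_map_measure hLmeas.aestronglyMeasurable hadd.aemeasurable).mp hInt'
    exact h
  have hmapint : KLdiv ν (gm D σ) = ∫ p, L (p.1 + p.2) ∂(μ.prod (gm D σ)) := by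
    rw [KLdiv, ← hG, ← hL, hν, integral_map hadd.aemeasurable hLmeas.aestronglyMeasurable]
  -- values of the A integral
  have hv1 : ∫ p, vnormSq p.1 ∂(μ.prod (gm D σ)) = ∫ w, vnormSq w ∂μ := by
    have h := integral_prod_mul (μ := μ) (ν := gm D σ) (f := fun w => vnormSq w)
      (g := fun _ => (1 : ℝ))
    simpa using h
  have hsz : ∫ p, (∑ j, p.2 j * p.1 j) ∂(μ.prod (gm D σ)) = 0 := by
    rw [integral_finset_sum _ fun j _ => hIntterm j]
    refine Finset.sum_eq_zero fun j _ => ?_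
    have h0 : ∫ p, p.2 j * p.1 j ∂(μ.prod (gm D σ))
        = ∫ p, p.1 j * p.2 j ∂(μ.prod (gm D σ)) := by
      apply integral_congr_ae
      filter_upwards with p using mul_comm _ _
    rw [h0, integral_prod_mul (f := fun w : Fin D → ℝ => w j) (g := fun y : Fin D → ℝ => y j),
      integral_coord hσ j, mul_zero]
  calc KLdiv ν (gm D σ) = ∫ p, L (p.1 + p.2) ∂(μ.prod (gm D σ)) := hmapint
    _ ≤ ∫ p, (A p + B p - 1) ∂(μ.prod (gm D σ)) :=
        integral_mono_ae hIntL ((hIntA.add hIntB).sub (integrable_const 1)) hae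
    _ = (∫ p, A p ∂(μ.prod (gm D σ))) + 1 - 1 := by
        have hAB : Integrable (fun p : (Fin D → ℝ) × (Fin D → ℝ) => A p + B p)
          (μ.prod (gm D σ)) := hIntA.add hIntB
        rw [integral_sub hAB (integrable_const 1), integral_add hIntA hIntB,
          hBval, integral_const]
        simp
    _ = ∫ p, A p ∂(μ.prod (gm D σ)) := by ring
    _ = (1 / (2 * σ ^ 2)) * ∫ w, vnormSq w ∂μ := by
        rw [hA]
        rw [integral_div, integral_add hIntA1 (hIntA2.const_mul 2), integral_const_mul,
          hv1, hsz]
        ring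

end Stmt10Aux

/-- Lemma: entropy of a Gaussian smoothing.
For the centered Gaussian `γ` with covariance `σ² I_D` on `ℝ^D`,
`KL(μ ∗ γ ‖ γ) ≤ (1/(2σ²)) ∫ ‖w‖² dμ` for every `μ` with finite second moment. -/
theorem stmt10
    (D : ℕ) (σ : ℝ) (hσ : 0 < σ)
    (γ : Measure (Fin D → ℝ))
    (hγ : γ = volume.withDensity fun w =>
      ENNReal.ofReal ((2 * π * σ ^ 2) ^ (-(D : ℝ) / 2) * Real.exp (-vnormSq w / (2 * σ ^ 2))))
    (μ : Measure (Fin D → ℝ)) [IsProbabilityMeasure μ]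
    (hμ2 : Integrable (fun w => vnormSq w) μ)
    (conv : Measure (Fin D → ℝ))
    (hconv : conv = (μ.prod γ).map fun p => p.1 + p.2) :
    KLdiv conv γ ≤ (1 / (2 * σ ^ 2)) * ∫ w, vnormSq w ∂μ := by
  have hγ' : γ = Stmt10Aux.gm D σ := hγ
  rw [hconv, hγ']
  exact Stmt10Aux.main D σ hσ μ hμ2
end
end

section
/- Fix data (x^{(i)}, y^{(i)})_{i=1}^n, x̃^{(i)} = (x^{(i)}, r̃) ∈ ℝ^{d+1}, and let Ê := (1/n) ∑_{i=1}^n x̃^{(i)} (x̃^{(i)})^⊤. For w = (ω₁, ω₂) ∈ ℝ^{d+1} × ℝ^{d+1} let Ψ(x̃; w) = φ(⟨ω₁, x̃⟩) − φ(⟨ω₂, x̃⟩) where φ is differentiable with |φ'| ≤ 1 and φ' is κ-Lipschitz, and let ρ be differentiable, C_ρ-Lipschitz, with C'_ρ-Lipschitz derivative ρ'. For a probability measure μ on ℝ^{2d+2} with ŷ(x̃;μ) = ∫ Ψ(x̃;w) dμ(w), define G[μ](w) := ( (1/n) ∑_i ρ'(ŷ(x̃^{(i)};μ) − y^{(i)})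 φ'(⟨ω₁, x̃^{(i)}⟩) x̃^{(i)} , −(1/n) ∑_i ρ'(ŷ(x̃^{(i)};μ) − y^{(i)}) φ'(⟨ω₂, x̃^{(i)}⟩) x̃^{(i)} ), the gradient of the first variation of the empirical risk. Then: (i) for all w, w' and all μ, ‖G[μ](w) − G[μ](w')‖ ≤ C κ C_ρ ‖Ê‖ ‖w − w'‖ for an absolute constant C; and (ii) for all w, all probability measures μ, μ', and every coupling Γ of (μ, μ'), ‖G[μ](w) − G[μ'](w)‖ ≤ 2 C'_ρ ‖Ê‖ ( ∫ ‖u − v‖² dΓ(u,v) )^{1/2}. -/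
open MeasureTheory Real

noncomputable section

/-- Euclidean inner product of plain vectors -/
def dotp {m : ℕ} (a b : Fin m → ℝ) : ℝ := ∑ j, a j * b j

/-- Euclidean norm on pairs of vectors (norm on `ℝ^{2d+2} ≅ ℝ^{d+1} × ℝ^{d+1}`) -/
def pnorm {m : ℕ} (p : (Fin m → ℝ) × (Fin m → ℝ)) : ℝ :=
  Real.sqrt (vnormSq p.1 + vnormSq p.2)

/-- operator (spectral) norm of a matrix -/
def opNorm {m n : ℕ} (A : Matrix (Fin m) (Fin n) ℝ) : ℝ :=
  ‖LinearMap.toContinuousLinearMap (Matrix.toEuclideanLin A)‖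


section Aux

lemma vnormSq_nonneg {m : ℕ} (v : Fin m → ℝ) : 0 ≤ vnormSq v :=
  Finset.sum_nonneg fun _ _ => sq_nonneg _

lemma dotp_smul_right {m : ℕ} (a : Fin m → ℝ) (s : ℝ) (b : Fin m → ℝ) :
    dotp a (s • b) = s * dotp a b := by
  simp only [dotp, Pi.smul_apply, smul_eq_mul, Finset.mul_sum]
  exact Finset.sum_congr rfl fun j _ => by ring

lemma dotp_sum_right {m : ℕ} {ι : Type*} (a : Fin m → ℝ) (s : Finset ι) (f : ι → Fin m → ℝ) :
    dotp a (∑ i ∈ s, f i) = ∑ i ∈ s, dotp a (f i) := by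
  simp only [dotp, Finset.sum_apply, Finset.mul_sum]
  exact Finset.sum_comm

lemma dotp_self {m : ℕ} (a : Fin m → ℝ) : dotp a a = vnormSq a := by
  simp [dotp, vnormSq, sq]

lemma dotp_sub_left {m : ℕ} (a b c : Fin m → ℝ) : dotp (a - b) c = dotp a c - dotp b c := by
  simp [dotp, sub_mul, Finset.sum_sub_distrib]

lemma abs_dotp_le {m : ℕ} (a b : Fin m → ℝ) :
    |dotp a b| ≤ Real.sqrt (vnormSq a) * Real.sqrt (vnormSq b) := by
  rw [abs_le]
  unfold vnormSq dotp
  constructor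
  · have h := Real.sum_mul_le_sqrt_mul_sqrt Finset.univ (fun j => -(a j)) b
    simp only [neg_mul, Finset.sum_neg_distrib, neg_sq] at h
    linarith
  · simpa using Real.sum_mul_le_sqrt_mul_sqrt Finset.univ a b

lemma sqrt_add_le_sqrt_two {a b : ℝ} (ha : 0 ≤ a) (hb : 0 ≤ b) :
    Real.sqrt a + Real.sqrt b ≤ Real.sqrt 2 * Real.sqrt (a + b) := by
  have h : (Real.sqrt a + Real.sqrt b) ^ 2 ≤ (Real.sqrt 2 * Real.sqrt (a + b)) ^ 2 := by
    rw [mul_pow, Real.sq_sqrt (by norm_num : (0:ℝ) ≤ 2), Real.sq_sqrt (by linarith)]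
    have := Real.sq_sqrt ha
    have := Real.sq_sqrt hb
    nlinarith [Real.sqrt_nonneg a, Real.sqrt_nonneg b, sq_nonneg (Real.sqrt a - Real.sqrt b)]
  have h2 : 0 ≤ Real.sqrt 2 * Real.sqrt (a + b) := by positivity
  nlinarith [Real.sqrt_nonneg a, Real.sqrt_nonneg b]

lemma le_of_sq_le_mul {t K : ℝ} (ht : 0 ≤ t) (hK : 0 ≤ K) (h : t ^ 2 ≤ K * t) : t ≤ K := by
  rcases eq_or_lt_of_le ht with h0 | h0
  · linarith
  · nlinarith

lemma weighted_cs {n : ℕ} (w : ℝ) (hw : 0 ≤ w) (a b : Fin n → ℝ) :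
    w * ∑ i, |a i| * |b i| ≤ Real.sqrt (w * ∑ i, (a i)^2) * Real.sqrt (w * ∑ i, (b i)^2) := by
  rw [Real.sqrt_mul hw, Real.sqrt_mul hw]
  have h := Real.sum_mul_le_sqrt_mul_sqrt Finset.univ (fun i => |a i|) (fun i => |b i|)
  simp only [sq_abs] at h
  calc w * ∑ i, |a i| * |b i|
      ≤ w * (Real.sqrt (∑ i, (a i)^2) * Real.sqrt (∑ i, (b i)^2)) :=
        mul_le_mul_of_nonneg_left h hw
    _ = (Real.sqrt w * Real.sqrt (∑ i, (a i)^2)) * (Real.sqrt w * Real.sqrt (∑ i, (b i)^2)) := by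
        rw [show Real.sqrt w * Real.sqrt (∑ i, (a i)^2) * (Real.sqrt w * Real.sqrt (∑ i, (b i)^2))
            = (Real.sqrt w * Real.sqrt w) * (Real.sqrt (∑ i, (a i)^2) * Real.sqrt (∑ i, (b i)^2))
          from by ring, Real.mul_self_sqrt hw]

lemma vnormSq_S_le {n m : ℕ} (xt : Fin n → Fin m → ℝ) (c r : Fin n → ℝ)
    (hr : ∀ i, |c i| ≤ r i) :
    vnormSq ((1/(n:ℝ)) • ∑ i, c i • xt i) ≤
      (1/(n:ℝ)) * ∑ i, r i * |dotp ((1/(n:ℝ)) • ∑ i, c i • xt i) (xt i)| := by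
  set S := (1/(n:ℝ)) • ∑ i, c i • xt i with hS
  have e : vnormSq S = (1/(n:ℝ)) * ∑ i, c i * dotp S (xt i) := by
    conv_lhs => rw [← dotp_self, hS]
    rw [show dotp ((1/(n:ℝ)) • ∑ i, c i • xt i) S = dotp S ((1/(n:ℝ)) • ∑ i, c i • xt i) from by
      simp [dotp, mul_comm]]
    rw [dotp_smul_right, dotp_sum_right]
    congr 1
    exact Finset.sum_congr rfl fun i _ => by rw [dotp_smul_right]
  rw [e]
  have hn0 : (0:ℝ) ≤ 1/(n:ℝ) := by positivity
  refine mul_le_mul_of_nonneg_left (Finset.sum_le_sum fun i _ => ?_) hn0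
  calc c i * dotp S (xt i) ≤ |c i * dotp S (xt i)| := le_abs_self _
    _ = |c i| * |dotp S (xt i)| := abs_mul _ _
    _ ≤ r i * |dotp S (xt i)| := mul_le_mul_of_nonneg_right (hr i) (abs_nonneg _)

lemma normS_le {n m : ℕ} (xt : Fin n → Fin m → ℝ) (opE : ℝ) (hopE : 0 ≤ opE)
    (hQ : ∀ v, (1/(n:ℝ)) * ∑ i, (dotp v (xt i))^2 ≤ opE * vnormSq v)
    (c : Fin n → ℝ) (B : ℝ) (hB : 0 ≤ B) (u : Fin m → ℝ)
    (hc : ∀ i, |c i| ≤ B * |dotp u (xt i)|) :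
    Real.sqrt (vnormSq ((1/(n:ℝ)) • ∑ i, c i • xt i)) ≤
      B * opE * Real.sqrt (vnormSq u) := by
  set S := (1/(n:ℝ)) • ∑ i, c i • xt i with hS
  set t := Real.sqrt (vnormSq S) with ht
  have ht0 : 0 ≤ t := Real.sqrt_nonneg _
  have hK : 0 ≤ B * opE * Real.sqrt (vnormSq u) := by positivity
  refine le_of_sq_le_mul ht0 hK ?_
  rw [ht, Real.sq_sqrt (vnormSq_nonneg _)]
  have h1 := vnormSq_S_le xt c (fun i => B * |dotp u (xt i)|) hc
  rw [← hS] at h1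
  have hn0 : (0:ℝ) ≤ 1/(n:ℝ) := by positivity
  have h2 : (1/(n:ℝ)) * ∑ i, B * |dotp u (xt i)| * |dotp S (xt i)|
      = B * ((1/(n:ℝ)) * ∑ i, |dotp u (xt i)| * |dotp S (xt i)|) := by
    rw [Finset.mul_sum, Finset.mul_sum, Finset.mul_sum]
    exact Finset.sum_congr rfl fun i _ => by ring
  have h3 := weighted_cs (1/(n:ℝ)) hn0 (fun i => dotp u (xt i)) (fun i => dotp S (xt i))
  have h4 : Real.sqrt ((1/(n:ℝ)) * ∑ i, (dotp u (xt i))^2) ≤ Real.sqrt (opE * vnormSq u) :=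
    Real.sqrt_le_sqrt (hQ u)
  have h5 : Real.sqrt ((1/(n:ℝ)) * ∑ i, (dotp S (xt i))^2) ≤ Real.sqrt (opE * vnormSq S) :=
    Real.sqrt_le_sqrt (hQ S)
  have h6 : Real.sqrt (opE * vnormSq u) = Real.sqrt opE * Real.sqrt (vnormSq u) :=
    Real.sqrt_mul hopE _
  have h7 : Real.sqrt (opE * vnormSq S) = Real.sqrt opE * t := by
    rw [Real.sqrt_mul hopE]
  have h8 : Real.sqrt opE * Real.sqrt opE = opE := Real.mul_self_sqrt hopE
  calc vnormSq S ≤ (1/(n:ℝ)) * ∑ i, B * |dotp u (xt i)| * |dotp S (xt i)| := h1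
    _ = B * ((1/(n:ℝ)) * ∑ i, |dotp u (xt i)| * |dotp S (xt i)|) := h2
    _ ≤ B * (Real.sqrt ((1/(n:ℝ)) * ∑ i, (dotp u (xt i))^2)
          * Real.sqrt ((1/(n:ℝ)) * ∑ i, (dotp S (xt i))^2)) :=
        mul_le_mul_of_nonneg_left h3 hB
    _ ≤ B * (Real.sqrt (opE * vnormSq u) * Real.sqrt (opE * vnormSq S)) := by
        refine mul_le_mul_of_nonneg_left ?_ hB
        exact mul_le_mul h4 h5 (Real.sqrt_nonneg _) (Real.sqrt_nonneg _)
    _ = B * opE * Real.sqrt (vnormSq u) * t := by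
        rw [h6, h7]; linear_combination (B * Real.sqrt (vnormSq u) * t) * h8

lemma abs_deriv_le_of_lip (f : ℝ → ℝ) (C : ℝ) (hC : 0 ≤ C)
    (hlip : ∀ s t, |f s - f t| ≤ C * |s - t|) (t : ℝ) : |deriv f t| ≤ C := by
  have L : LipschitzWith C.toNNReal f := by
    apply LipschitzWith.of_dist_le_mul
    intro a b
    rw [Real.dist_eq, Real.dist_eq, Real.coe_toNNReal _ hC]
    exact hlip a b
  simpa [Real.norm_eq_abs, Real.coe_toNNReal _ hC] using
    norm_deriv_le_of_lipschitz (𝕜 := ℝ) L (x₀ := t)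

lemma lip_of_deriv_le (f : ℝ → ℝ) (hf : Differentiable ℝ f) (C : ℝ)
    (hd : ∀ t, |deriv f t| ≤ C) (s t : ℝ) : |f s - f t| ≤ C * |s - t| := by
  have := Convex.norm_image_sub_le_of_norm_deriv_le (f := f) (s := Set.univ)
    (fun x _ => hf x) (fun x _ => by simpa [Real.norm_eq_abs] using hd x)
    convex_univ (Set.mem_univ t) (Set.mem_univ s)
  simpa [Real.norm_eq_abs] using this

lemma integral_sqrt_le {α : Type*} [MeasurableSpace α] (μ : Measure α) [IsProbabilityMeasure μ]
    (W : α → ℝ) (hW0 : ∀ p, 0 ≤ W p) (hW : Integrable W μ)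
    (hsm : AEStronglyMeasurable (fun p => Real.sqrt (W p)) μ) :
    ∫ p, Real.sqrt (W p) ∂μ ≤ Real.sqrt (∫ p, W p ∂μ) := by
  set I := ∫ p, W p ∂μ with hI
  have hI0 : 0 ≤ I := integral_nonneg hW0
  have hint_sqrt : Integrable (fun p => Real.sqrt (W p)) μ := by
    refine Integrable.mono' (g := fun p => 1 + W p) ((integrable_const 1).add hW) hsm ?_
    filter_upwards with p
    rw [Real.norm_eq_abs, abs_of_nonneg (Real.sqrt_nonneg _)]
    calc Real.sqrt (W p) ≤ Real.sqrt ((1 + W p)^2) := by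
          apply Real.sqrt_le_sqrt; nlinarith [hW0 p]
      _ = 1 + W p := Real.sqrt_sq (by nlinarith [hW0 p])
  rcases eq_or_lt_of_le hI0 with h0 | h0
  · have hae : W =ᵐ[μ] 0 := (integral_eq_zero_iff_of_nonneg hW0 hW).mp h0.symm
    have : (fun p => Real.sqrt (W p)) =ᵐ[μ] 0 := by
      filter_upwards [hae] with p hp
      simp [hp]
    rw [integral_congr_ae this]
    simp [Real.sqrt_nonneg]
  · have key : ∀ p, Real.sqrt (W p) ≤ (W p + I) / (2 * Real.sqrt I) := by
      intro p
      rw [le_div_iff₀ (by positivity)]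
      nlinarith [sq_nonneg (Real.sqrt (W p) - Real.sqrt I), Real.sq_sqrt (hW0 p),
        Real.sq_sqrt hI0, Real.sqrt_nonneg (W p), Real.sqrt_nonneg I]
    calc ∫ p, Real.sqrt (W p) ∂μ ≤ ∫ p, (W p + I) / (2 * Real.sqrt I) ∂μ := by
          refine integral_mono hint_sqrt ?_ key
          exact (hW.add (integrable_const I)).div_const _
      _ = (I + I) / (2 * Real.sqrt I) := by
          rw [integral_div, integral_add hW (integrable_const I), integral_const]
          simp
          rw [← hI]
      _ = Real.sqrt I := by
          rw [eq_comm, eq_div_iff (by positivity)]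
          nlinarith [Real.sq_sqrt hI0]

lemma cont_dotp {m : ℕ} (a : Fin m → ℝ) : Continuous (fun v : Fin m → ℝ => dotp v a) := by
  unfold dotp
  exact continuous_finset_sum _ fun j _ => (continuous_apply j).mul continuous_const

lemma cont_vnormSq {m : ℕ} : Continuous (fun v : Fin m → ℝ => vnormSq v) := by
  unfold vnormSq
  exact continuous_finset_sum _ fun j _ => (continuous_apply j).pow 2

lemma cs_Q {n m : ℕ} (xt : Fin n → Fin m → ℝ) (opE : ℝ) (hopE : 0 ≤ opE)
    (hQ : ∀ v, (1/(n:ℝ)) * ∑ i, (dotp v (xt i))^2 ≤ opE * vnormSq v)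
    (u v : Fin m → ℝ) :
    (1/(n:ℝ)) * ∑ i, |dotp u (xt i)| * |dotp v (xt i)|
      ≤ opE * (Real.sqrt (vnormSq u) * Real.sqrt (vnormSq v)) := by
  have h3 := weighted_cs (1/(n:ℝ)) (by positivity) (fun i => dotp u (xt i)) (fun i => dotp v (xt i))
  have h4 : Real.sqrt ((1/(n:ℝ)) * ∑ i, (dotp u (xt i))^2) ≤ Real.sqrt (opE * vnormSq u) :=
    Real.sqrt_le_sqrt (hQ u)
  have h5 : Real.sqrt ((1/(n:ℝ)) * ∑ i, (dotp v (xt i))^2) ≤ Real.sqrt (opE * vnormSq v) :=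
    Real.sqrt_le_sqrt (hQ v)
  have h8 : Real.sqrt opE * Real.sqrt opE = opE := Real.mul_self_sqrt hopE
  calc (1/(n:ℝ)) * ∑ i, |dotp u (xt i)| * |dotp v (xt i)|
      ≤ Real.sqrt ((1/(n:ℝ)) * ∑ i, (dotp u (xt i))^2)
        * Real.sqrt ((1/(n:ℝ)) * ∑ i, (dotp v (xt i))^2) := h3
    _ ≤ Real.sqrt (opE * vnormSq u) * Real.sqrt (opE * vnormSq v) :=
        mul_le_mul h4 h5 (Real.sqrt_nonneg _) (Real.sqrt_nonneg _)
    _ = opE * (Real.sqrt (vnormSq u) * Real.sqrt (vnormSq v)) := by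
        rw [Real.sqrt_mul hopE, Real.sqrt_mul hopE]
        linear_combination (Real.sqrt (vnormSq u) * Real.sqrt (vnormSq v)) * h8

lemma sqrtW_le_one_add {m : ℕ}
    (p : ((Fin m → ℝ) × (Fin m → ℝ)) × ((Fin m → ℝ) × (Fin m → ℝ))) :
    Real.sqrt (vnormSq (p.1.1 - p.2.1) + vnormSq (p.1.2 - p.2.2))
      ≤ 1 + (vnormSq (p.1.1 - p.2.1) + vnormSq (p.1.2 - p.2.2)) := by
  have h1 := vnormSq_nonneg (p.1.1 - p.2.1)
  have h2 := vnormSq_nonneg (p.1.2 - p.2.2)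
  set W := vnormSq (p.1.1 - p.2.1) + vnormSq (p.1.2 - p.2.2) with hW
  calc Real.sqrt W ≤ Real.sqrt ((1 + W)^2) := by
        apply Real.sqrt_le_sqrt; nlinarith
    _ = 1 + W := Real.sqrt_sq (by nlinarith)

lemma integrable_pair_dot {m : ℕ} (a : Fin m → ℝ)
    (Γ : Measure (((Fin m → ℝ) × (Fin m → ℝ)) × ((Fin m → ℝ) × (Fin m → ℝ))))
    [IsProbabilityMeasure Γ]
    (hW : Integrable (fun p => vnormSq (p.1.1 - p.2.1) + vnormSq (p.1.2 - p.2.2)) Γ) :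
    Integrable (fun p => |dotp (p.1.1 - p.2.1) a| + |dotp (p.1.2 - p.2.2) a|) Γ := by
  set M := Real.sqrt (vnormSq a) with hM
  have hM0 : 0 ≤ M := Real.sqrt_nonneg _
  have hcΔ1 : Continuous (fun p : ((Fin m → ℝ) × (Fin m → ℝ)) × ((Fin m → ℝ) × (Fin m → ℝ)) =>
      p.1.1 - p.2.1) :=
    (continuous_fst.comp continuous_fst).sub (continuous_fst.comp continuous_snd)
  have hcΔ2 : Continuous (fun p : ((Fin m → ℝ) × (Fin m → ℝ)) × ((Fin m → ℝ) × (Fin m → ℝ)) =>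
      p.1.2 - p.2.2) :=
    (continuous_snd.comp continuous_fst).sub (continuous_snd.comp continuous_snd)
  have hcont : Continuous (fun p : ((Fin m → ℝ) × (Fin m → ℝ)) × ((Fin m → ℝ) × (Fin m → ℝ)) =>
      |dotp (p.1.1 - p.2.1) a| + |dotp (p.1.2 - p.2.2) a|) :=
    (((cont_dotp a).comp hcΔ1).abs).add (((cont_dotp a).comp hcΔ2).abs)
  refine Integrable.mono'
    (g := fun p => (2*M) * (1 + (vnormSq (p.1.1 - p.2.1) + vnormSq (p.1.2 - p.2.2))))
    (((integrable_const 1).add hW).const_mul _) hcont.aestronglyMeasurable ?_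
  filter_upwards with p
  set W := vnormSq (p.1.1 - p.2.1) + vnormSq (p.1.2 - p.2.2) with hWp
  have hW0 : 0 ≤ W := add_nonneg (vnormSq_nonneg _) (vnormSq_nonneg _)
  have hb1 : |dotp (p.1.1 - p.2.1) a| ≤ Real.sqrt W * M := by
    calc |dotp (p.1.1 - p.2.1) a|
        ≤ Real.sqrt (vnormSq (p.1.1 - p.2.1)) * Real.sqrt (vnormSq a) := abs_dotp_le _ _
      _ ≤ Real.sqrt W * M := by
          refine mul_le_mul_of_nonneg_right ?_ hM0
          apply Real.sqrt_le_sqrt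
          have := vnormSq_nonneg (p.1.2 - p.2.2)
          rw [hWp]; linarith
  have hb2 : |dotp (p.1.2 - p.2.2) a| ≤ Real.sqrt W * M := by
    calc |dotp (p.1.2 - p.2.2) a|
        ≤ Real.sqrt (vnormSq (p.1.2 - p.2.2)) * Real.sqrt (vnormSq a) := abs_dotp_le _ _
      _ ≤ Real.sqrt W * M := by
          refine mul_le_mul_of_nonneg_right ?_ hM0
          apply Real.sqrt_le_sqrt
          have := vnormSq_nonneg (p.1.1 - p.2.1)
          rw [hWp]; linarith
  have hn : 0 ≤ |dotp (p.1.1 - p.2.1) a| + |dotp (p.1.2 - p.2.2) a| :=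
    add_nonneg (abs_nonneg _) (abs_nonneg _)
  rw [Real.norm_eq_abs, abs_of_nonneg hn]
  have hs := sqrtW_le_one_add p
  rw [← hWp] at hs
  calc |dotp (p.1.1 - p.2.1) a| + |dotp (p.1.2 - p.2.2) a|
      ≤ Real.sqrt W * M + Real.sqrt W * M := add_le_add hb1 hb2
    _ = 2 * M * Real.sqrt W := by ring
    _ ≤ 2 * M * (1 + W) := mul_le_mul_of_nonneg_left hs (by positivity)

lemma normS_le_meas {n m : ℕ} (xt : Fin n → Fin m → ℝ) (opE : ℝ) (hopE : 0 ≤ opE)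
    (hQ : ∀ v, (1/(n:ℝ)) * ∑ i, (dotp v (xt i))^2 ≤ opE * vnormSq v)
    (Γ : Measure (((Fin m → ℝ) × (Fin m → ℝ)) × ((Fin m → ℝ) × (Fin m → ℝ))))
    [IsProbabilityMeasure Γ]
    (hW : Integrable (fun p => vnormSq (p.1.1 - p.2.1) + vnormSq (p.1.2 - p.2.2)) Γ)
    (c : Fin n → ℝ) (B : ℝ) (hB : 0 ≤ B)
    (hc : ∀ i, |c i| ≤ B * ∫ p,
      (|dotp (p.1.1 - p.2.1) (xt i)| + |dotp (p.1.2 - p.2.2) (xt i)|) ∂Γ) :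
    Real.sqrt (vnormSq ((1/(n:ℝ)) • ∑ i, c i • xt i)) ≤
      Real.sqrt 2 * B * opE *
        Real.sqrt (∫ p, (vnormSq (p.1.1 - p.2.1) + vnormSq (p.1.2 - p.2.2)) ∂Γ) := by
  classical
  set P := ((Fin m → ℝ) × (Fin m → ℝ)) × ((Fin m → ℝ) × (Fin m → ℝ))
  set W : P → ℝ := fun p => vnormSq (p.1.1 - p.2.1) + vnormSq (p.1.2 - p.2.2) with hWdef
  have hW0 : ∀ p, 0 ≤ W p := fun p => add_nonneg (vnormSq_nonneg _) (vnormSq_nonneg _)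
  set I := ∫ p, W p ∂Γ with hIdef
  have hI0 : 0 ≤ I := integral_nonneg hW0
  set S := (1/(n:ℝ)) • ∑ i, c i • xt i with hS
  set t := Real.sqrt (vnormSq S) with ht
  have ht0 : 0 ≤ t := Real.sqrt_nonneg _
  have hK : 0 ≤ Real.sqrt 2 * B * opE * Real.sqrt I := by positivity
  have hcΔ1 : Continuous (fun p : P => p.1.1 - p.2.1) :=
    (continuous_fst.comp continuous_fst).sub (continuous_fst.comp continuous_snd)
  have hcΔ2 : Continuous (fun p : P => p.1.2 - p.2.2) :=
    (continuous_snd.comp continuous_fst).sub (continuous_snd.comp continuous_snd)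
  have hcontW : Continuous W := (cont_vnormSq.comp hcΔ1).add (cont_vnormSq.comp hcΔ2)
  set h : Fin n → P → ℝ := fun i p =>
    |dotp (p.1.1 - p.2.1) (xt i)| + |dotp (p.1.2 - p.2.2) (xt i)| with hhdef
  have hinth : ∀ i, Integrable (h i) Γ := fun i => integrable_pair_dot (xt i) Γ hW
  have hintW1 : Integrable (fun p => 1 + W p) Γ := (integrable_const 1).add hW
  set g : P → ℝ := fun p => (1/(n:ℝ)) * ∑ i, h i p * |dotp S (xt i)| with hgdef
  have hintg : Integrable g Γ := by
    apply Integrable.const_mul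
    apply integrable_finset_sum
    intro i _
    exact (hinth i).mul_const _
  have hg_eq : ∫ p, g p ∂Γ = (1/(n:ℝ)) * ∑ i, (∫ p, h i p ∂Γ) * |dotp S (xt i)| := by
    rw [hgdef]
    rw [integral_const_mul]
    congr 1
    rw [integral_finset_sum _ (fun i _ => (hinth i).mul_const _)]
    exact Finset.sum_congr rfl fun i _ => integral_mul_const _ _
  have h1 : vnormSq S ≤ B * ∫ p, g p ∂Γ := by
    have := vnormSq_S_le xt c (fun i => B * ∫ p, h i p ∂Γ) hc
    rw [← hS] at this
    rw [hg_eq]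
    calc vnormSq S ≤ (1/(n:ℝ)) * ∑ i, (B * ∫ p, h i p ∂Γ) * |dotp S (xt i)| := this
      _ = B * ((1/(n:ℝ)) * ∑ i, (∫ p, h i p ∂Γ) * |dotp S (xt i)|) := by
          rw [Finset.mul_sum, Finset.mul_sum, Finset.mul_sum]
          exact Finset.sum_congr rfl fun i _ => by ring
  have h2 : ∀ p, g p ≤ (opE * t * Real.sqrt 2) * Real.sqrt (W p) := by
    intro p
    have e1 : g p = (1/(n:ℝ)) * ∑ i, |dotp (p.1.1 - p.2.1) (xt i)| * |dotp S (xt i)|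
        + (1/(n:ℝ)) * ∑ i, |dotp (p.1.2 - p.2.2) (xt i)| * |dotp S (xt i)| := by
      rw [hgdef]
      simp only [hhdef]
      rw [← mul_add, ← Finset.sum_add_distrib]
      congr 1
      exact Finset.sum_congr rfl fun i _ => by ring
    have c1 := cs_Q xt opE hopE hQ (p.1.1 - p.2.1) S
    have c2 := cs_Q xt opE hopE hQ (p.1.2 - p.2.2) S
    have hsum : Real.sqrt (vnormSq (p.1.1 - p.2.1)) + Real.sqrt (vnormSq (p.1.2 - p.2.2))
        ≤ Real.sqrt 2 * Real.sqrt (W p) :=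
      sqrt_add_le_sqrt_two (vnormSq_nonneg _) (vnormSq_nonneg _)
    calc g p = (1/(n:ℝ)) * ∑ i, |dotp (p.1.1 - p.2.1) (xt i)| * |dotp S (xt i)|
        + (1/(n:ℝ)) * ∑ i, |dotp (p.1.2 - p.2.2) (xt i)| * |dotp S (xt i)| := e1
      _ ≤ opE * (Real.sqrt (vnormSq (p.1.1 - p.2.1)) * t)
          + opE * (Real.sqrt (vnormSq (p.1.2 - p.2.2)) * t) := add_le_add c1 c2
      _ = (opE * t) * (Real.sqrt (vnormSq (p.1.1 - p.2.1))
            + Real.sqrt (vnormSq (p.1.2 - p.2.2))) := by ring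
      _ ≤ (opE * t) * (Real.sqrt 2 * Real.sqrt (W p)) :=
          mul_le_mul_of_nonneg_left hsum (by positivity)
      _ = (opE * t * Real.sqrt 2) * Real.sqrt (W p) := by ring
  have hsqrtWint : Integrable (fun p => Real.sqrt (W p)) Γ := by
    refine Integrable.mono' hintW1
      (Real.continuous_sqrt.comp hcontW).aestronglyMeasurable ?_
    filter_upwards with p
    rw [Real.norm_eq_abs, abs_of_nonneg (Real.sqrt_nonneg _)]
    exact sqrtW_le_one_add p
  have h3 : ∫ p, g p ∂Γ ≤ (opE * t * Real.sqrt 2) * Real.sqrt I := by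
    calc ∫ p, g p ∂Γ ≤ ∫ p, (opE * t * Real.sqrt 2) * Real.sqrt (W p) ∂Γ :=
          integral_mono hintg (hsqrtWint.const_mul _) h2
      _ = (opE * t * Real.sqrt 2) * ∫ p, Real.sqrt (W p) ∂Γ := integral_const_mul _ _
      _ ≤ (opE * t * Real.sqrt 2) * Real.sqrt I := by
          refine mul_le_mul_of_nonneg_left ?_ (by positivity)
          exact integral_sqrt_le Γ W hW0 hW
            (Real.continuous_sqrt.comp hcontW).aestronglyMeasurable
  refine le_of_sq_le_mul ht0 hK ?_
  rw [Real.sq_sqrt (vnormSq_nonneg _)]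
  calc vnormSq S ≤ B * ∫ p, g p ∂Γ := h1
    _ ≤ B * ((opE * t * Real.sqrt 2) * Real.sqrt I) := mul_le_mul_of_nonneg_left h3 hB
    _ = Real.sqrt 2 * B * opE * Real.sqrt I * t := by ring

lemma vecMulVec_mulVec {m : ℕ} (a b v : Fin m → ℝ) :
    (Matrix.vecMulVec a b).mulVec v = (dotp b v) • a := by
  funext j
  simp only [Matrix.mulVec, dotProduct, Matrix.vecMulVec_apply, dotp, Pi.smul_apply,
    smul_eq_mul, Finset.sum_mul]
  exact Finset.sum_congr rfl fun k _ => by ring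

lemma norm_euclid {m : ℕ} (w : Fin m → ℝ) :
    ‖(WithLp.equiv 2 (Fin m → ℝ)).symm w‖ = Real.sqrt (vnormSq w) := by
  rw [EuclideanSpace.norm_eq]
  simp [vnormSq, Real.norm_eq_abs, sq_abs]

lemma mulVec_norm_le {m : ℕ} (A : Matrix (Fin m) (Fin m) ℝ) (v : Fin m → ℝ) :
    Real.sqrt (vnormSq (A.mulVec v)) ≤ opNorm A * Real.sqrt (vnormSq v) := by
  have h1 := (LinearMap.toContinuousLinearMap (Matrix.toEuclideanLin A)).le_opNorm
    ((WithLp.equiv 2 (Fin m → ℝ)).symm v)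
  have e1 : (LinearMap.toContinuousLinearMap (Matrix.toEuclideanLin A))
      ((WithLp.equiv 2 (Fin m → ℝ)).symm v) = (WithLp.equiv 2 (Fin m → ℝ)).symm (A.mulVec v) := by
    simp [Matrix.toEuclideanLin_apply]
  rw [e1, norm_euclid, norm_euclid] at h1
  exact h1

lemma Qle {n m : ℕ} (xt : Fin n → Fin m → ℝ)
    (Emp : Matrix (Fin m) (Fin m) ℝ)
    (hEmp : Emp = (1 / (n : ℝ)) • ∑ i, Matrix.vecMulVec (xt i) (xt i)) (v : Fin m → ℝ) :
    (1 / (n:ℝ)) * ∑ i, (dotp v (xt i))^2 ≤ opNorm Emp * vnormSq v := by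
  have hmv : Emp.mulVec v = (1 / (n:ℝ)) • ∑ i, (dotp (xt i) v) • xt i := by
    rw [hEmp, Matrix.smul_mulVec]
    congr 1
    rw [show (∑ i, Matrix.vecMulVec (xt i) (xt i)).mulVec v
        = ∑ i, (Matrix.vecMulVec (xt i) (xt i)).mulVec v by
      funext j
      simp only [Matrix.mulVec, dotProduct, Matrix.sum_apply, Finset.sum_apply,
        Finset.sum_mul]
      rw [Finset.sum_comm]]
    exact Finset.sum_congr rfl fun i _ => vecMulVec_mulVec _ _ _
  have key : dotp v (Emp.mulVec v) = (1/(n:ℝ)) * ∑ i, (dotp v (xt i))^2 := by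
    rw [hmv, dotp_smul_right, dotp_sum_right]
    congr 1
    refine Finset.sum_congr rfl fun i _ => ?_
    rw [dotp_smul_right, sq]
    rw [show dotp (xt i) v = dotp v (xt i) from by simp [dotp, mul_comm]]
  rw [← key]
  calc dotp v (Emp.mulVec v) ≤ |dotp v (Emp.mulVec v)| := le_abs_self _
    _ ≤ Real.sqrt (vnormSq v) * Real.sqrt (vnormSq (Emp.mulVec v)) := abs_dotp_le _ _
    _ ≤ Real.sqrt (vnormSq v) * (opNorm Emp * Real.sqrt (vnormSq v)) :=
        mul_le_mul_of_nonneg_left (mulVec_norm_le _ _) (Real.sqrt_nonneg _)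
    _ = opNorm Emp * (Real.sqrt (vnormSq v) * Real.sqrt (vnormSq v)) := by ring
    _ = opNorm Emp * vnormSq v := by rw [Real.mul_self_sqrt (vnormSq_nonneg v)]

lemma smul_sum_sub {n m : ℕ} (xt : Fin n → Fin m → ℝ) (c c' : Fin n → ℝ) :
    ((1/(n:ℝ)) • ∑ i, c i • xt i) - ((1/(n:ℝ)) • ∑ i, c' i • xt i)
      = (1/(n:ℝ)) • ∑ i, (c i - c' i) • xt i := by
  rw [← smul_sub, ← Finset.sum_sub_distrib]
  congr 1
  exact Finset.sum_congr rfl fun i _ => (sub_smul _ _ _).symm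

lemma pnorm_comb {m : ℕ} (p q : (Fin m → ℝ) × (Fin m → ℝ)) (K : ℝ) (hK : 0 ≤ K)
    (h1 : Real.sqrt (vnormSq p.1) ≤ K * Real.sqrt (vnormSq q.1))
    (h2 : Real.sqrt (vnormSq p.2) ≤ K * Real.sqrt (vnormSq q.2)) :
    pnorm p ≤ K * pnorm q := by
  have e1 : vnormSq p.1 ≤ K^2 * vnormSq q.1 := by
    have h := mul_self_le_mul_self (Real.sqrt_nonneg (vnormSq p.1)) h1
    rw [Real.mul_self_sqrt (vnormSq_nonneg _)] at h
    nlinarith [Real.mul_self_sqrt (vnormSq_nonneg q.1), Real.sqrt_nonneg (vnormSq q.1)]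
  have e2 : vnormSq p.2 ≤ K^2 * vnormSq q.2 := by
    have h := mul_self_le_mul_self (Real.sqrt_nonneg (vnormSq p.2)) h2
    rw [Real.mul_self_sqrt (vnormSq_nonneg _)] at h
    nlinarith [Real.mul_self_sqrt (vnormSq_nonneg q.2), Real.sqrt_nonneg (vnormSq q.2)]
  unfold pnorm
  calc Real.sqrt (vnormSq p.1 + vnormSq p.2)
      ≤ Real.sqrt (K^2 * (vnormSq q.1 + vnormSq q.2)) := by
        apply Real.sqrt_le_sqrt; nlinarith
    _ = K * Real.sqrt (vnormSq q.1 + vnormSq q.2) := by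
        rw [Real.sqrt_mul (sq_nonneg K), Real.sqrt_sq hK]

lemma pnorm_le_two {m : ℕ} (p : (Fin m → ℝ) × (Fin m → ℝ)) (M : ℝ) (hM : 0 ≤ M)
    (h1 : Real.sqrt (vnormSq p.1) ≤ M) (h2 : Real.sqrt (vnormSq p.2) ≤ M) :
    pnorm p ≤ Real.sqrt 2 * M := by
  have e1 : vnormSq p.1 ≤ M^2 := by
    have h := mul_self_le_mul_self (Real.sqrt_nonneg (vnormSq p.1)) h1
    rw [Real.mul_self_sqrt (vnormSq_nonneg _)] at h
    nlinarith
  have e2 : vnormSq p.2 ≤ M^2 := by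
    have h := mul_self_le_mul_self (Real.sqrt_nonneg (vnormSq p.2)) h2
    rw [Real.mul_self_sqrt (vnormSq_nonneg _)] at h
    nlinarith
  unfold pnorm
  calc Real.sqrt (vnormSq p.1 + vnormSq p.2) ≤ Real.sqrt (2 * M^2) := by
        apply Real.sqrt_le_sqrt; nlinarith
    _ = Real.sqrt 2 * M := by
        rw [Real.sqrt_mul (by norm_num : (0:ℝ) ≤ 2), Real.sqrt_sq hM]


lemma pair_sub_eq {n m : ℕ} (xt : Fin n → Fin m → ℝ) (A A' B B' : Fin n → ℝ) :
    (((1/(n:ℝ)) • ∑ i, A i • xt i, -((1/(n:ℝ)) • ∑ i, B i • xt i))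
      - ((1/(n:ℝ)) • ∑ i, A' i • xt i, -((1/(n:ℝ)) • ∑ i, B' i • xt i)))
    = ((1/(n:ℝ)) • ∑ i, (A i - A' i) • xt i, (1/(n:ℝ)) • ∑ i, (B' i - B i) • xt i) := by
  rw [Prod.mk_sub_mk]
  refine Prod.ext ?_ ?_
  · exact smul_sum_sub xt A A'
  · show -((1/(n:ℝ)) • ∑ i, B i • xt i) - -((1/(n:ℝ)) • ∑ i, B' i • xt i)
        = (1/(n:ℝ)) • ∑ i, (B' i - B i) • xt i
    rw [neg_sub_neg]
    exact smul_sum_sub xt B' B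

end Aux

/-- Lemma: Lipschitzness of the gradient of the first variation of the
empirical risk, in the weight and in the measure. -/
theorem stmt15 :
    ∃ C : ℝ, 0 < C ∧
      ∀ (d n : ℕ), 0 < n →
      ∀ (x : Fin n → Fin d → ℝ) (y : Fin n → ℝ) (rt : ℝ)
        (xt : Fin n → Fin (d + 1) → ℝ), (∀ i, xt i = Fin.snoc (x i) rt) →
      ∀ Emp : Matrix (Fin (d + 1)) (Fin (d + 1)) ℝ,
        Emp = (1 / (n : ℝ)) • ∑ i, Matrix.vecMulVec (xt i) (xt i) →
      ∀ (φ : ℝ → ℝ) (κ : ℝ), 0 < κ → Differentiable ℝ φ →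
        (∀ t, |deriv φ t| ≤ 1) → (∀ s t, |deriv φ s - deriv φ t| ≤ κ * |s - t|) →
      ∀ (ρ : ℝ → ℝ) (Cρ C'ρ : ℝ), 0 ≤ Cρ → 0 ≤ C'ρ → Differentiable ℝ ρ →
        (∀ s t, |ρ s - ρ t| ≤ Cρ * |s - t|) →
        (∀ s t, |deriv ρ s - deriv ρ t| ≤ C'ρ * |s - t|) →
      -- the gradient of the first variation of the empirical risk
      ∀ G : Measure ((Fin (d + 1) → ℝ) × (Fin (d + 1) → ℝ)) →
          ((Fin (d + 1) → ℝ) × (Fin (d + 1) → ℝ)) → ((Fin (d + 1) → ℝ) × (Fin (d + 1) → ℝ)),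
        (G = fun μ w =>
          ((1 / (n : ℝ)) • ∑ i,
              (deriv ρ ((∫ v, (φ (dotp v.1 (xt i)) - φ (dotp v.2 (xt i))) ∂μ) - y i) *
                deriv φ (dotp w.1 (xt i))) • xt i,
            -((1 / (n : ℝ)) • ∑ i,
              (deriv ρ ((∫ v, (φ (dotp v.1 (xt i)) - φ (dotp v.2 (xt i))) ∂μ) - y i) *
                deriv φ (dotp w.2 (xt i))) • xt i))) →
        -- (i) Lipschitzness in the weight
        ((∀ μ : Measure ((Fin (d + 1) → ℝ) × (Fin (d + 1) → ℝ)), IsProbabilityMeasure μ →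
          ∀ w w' : (Fin (d + 1) → ℝ) × (Fin (d + 1) → ℝ),
            pnorm (G μ w - G μ w') ≤ C * κ * Cρ * opNorm Emp * pnorm (w - w')) ∧
        -- (ii) Lipschitzness in the measure, via couplings
        (∀ w : (Fin (d + 1) → ℝ) × (Fin (d + 1) → ℝ),
          ∀ μ μ' : Measure ((Fin (d + 1) → ℝ) × (Fin (d + 1) → ℝ)),
            IsProbabilityMeasure μ → IsProbabilityMeasure μ' →
            (∀ i, Integrable (fun v : (Fin (d + 1) → ℝ) × (Fin (d + 1) → ℝ) =>
              φ (dotp v.1 (xt i)) - φ (dotp v.2 (xt i))) μ) →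
            (∀ i, Integrable (fun v : (Fin (d + 1) → ℝ) × (Fin (d + 1) → ℝ) =>
              φ (dotp v.1 (xt i)) - φ (dotp v.2 (xt i))) μ') →
          ∀ Γ : Measure (((Fin (d + 1) → ℝ) × (Fin (d + 1) → ℝ)) ×
              ((Fin (d + 1) → ℝ) × (Fin (d + 1) → ℝ))),
            IsProbabilityMeasure Γ →
            Γ.map Prod.fst = μ → Γ.map Prod.snd = μ' →
            Integrable (fun p => vnormSq (p.1.1 - p.2.1) + vnormSq (p.1.2 - p.2.2)) Γ →
            pnorm (G μ w - G μ' w) ≤ 2 * C'ρ * opNorm Emp *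
              Real.sqrt (∫ p, (vnormSq (p.1.1 - p.2.1) + vnormSq (p.1.2 - p.2.2)) ∂Γ))) := by
  classical
  refine ⟨1, one_pos, ?_⟩
  intro d n hn x y rt xt hxt Emp hEmp φ κ hκ hφdiff hφd1 hφdlip ρ Cρ C'ρ hCρ hC'ρ hρdiff
    hρlip hρ'lip G hG
  have hopE : (0:ℝ) ≤ opNorm Emp := norm_nonneg _
  have hQ : ∀ v, (1/(n:ℝ)) * ∑ i, (dotp v (xt i))^2 ≤ opNorm Emp * vnormSq v :=
    Qle xt Emp hEmp
  have hρ'bd : ∀ t, |deriv ρ t| ≤ Cρ := abs_deriv_le_of_lip ρ Cρ hCρ hρlip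
  have hφlip : ∀ s t, |φ s - φ t| ≤ 1 * |s - t| := lip_of_deriv_le φ hφdiff 1 hφd1
  constructor
  · -- (i) Lipschitzness in the weight
    intro μ hμ w w'
    simp only [hG]
    rw [pair_sub_eq]
    refine le_trans (pnorm_comb _ (w - w') (κ * Cρ * opNorm Emp) (by positivity) ?_ ?_)
      (le_of_eq (by ring))
    · have hc : ∀ i,
          |(deriv ρ ((∫ v, (φ (dotp v.1 (xt i)) - φ (dotp v.2 (xt i))) ∂μ) - y i) *
              deriv φ (dotp w.1 (xt i))) -
            (deriv ρ ((∫ v, (φ (dotp v.1 (xt i)) - φ (dotp v.2 (xt i))) ∂μ) - y i) *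
              deriv φ (dotp w'.1 (xt i)))|
          ≤ (κ * Cρ) * |dotp (w.1 - w'.1) (xt i)| := by
        intro i
        rw [← mul_sub, abs_mul, dotp_sub_left]
        calc |deriv ρ ((∫ v, (φ (dotp v.1 (xt i)) - φ (dotp v.2 (xt i))) ∂μ) - y i)| *
              |deriv φ (dotp w.1 (xt i)) - deriv φ (dotp w'.1 (xt i))|
            ≤ Cρ * (κ * |dotp w.1 (xt i) - dotp w'.1 (xt i)|) :=
              mul_le_mul (hρ'bd _) (hφdlip _ _) (abs_nonneg _) hCρ
          _ = κ * Cρ * |dotp w.1 (xt i) - dotp w'.1 (xt i)| := by ring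
      exact normS_le xt (opNorm Emp) hopE hQ _ (κ * Cρ) (by positivity) (w.1 - w'.1) hc
    · have hc : ∀ i,
          |(deriv ρ ((∫ v, (φ (dotp v.1 (xt i)) - φ (dotp v.2 (xt i))) ∂μ) - y i) *
              deriv φ (dotp w'.2 (xt i))) -
            (deriv ρ ((∫ v, (φ (dotp v.1 (xt i)) - φ (dotp v.2 (xt i))) ∂μ) - y i) *
              deriv φ (dotp w.2 (xt i)))|
          ≤ (κ * Cρ) * |dotp (w.2 - w'.2) (xt i)| := by
        intro i
        rw [← mul_sub, abs_mul, dotp_sub_left]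
        calc |deriv ρ ((∫ v, (φ (dotp v.1 (xt i)) - φ (dotp v.2 (xt i))) ∂μ) - y i)| *
              |deriv φ (dotp w'.2 (xt i)) - deriv φ (dotp w.2 (xt i))|
            ≤ Cρ * (κ * |dotp w'.2 (xt i) - dotp w.2 (xt i)|) :=
              mul_le_mul (hρ'bd _) (hφdlip _ _) (abs_nonneg _) hCρ
          _ = κ * Cρ * |dotp w.2 (xt i) - dotp w'.2 (xt i)| := by
              rw [abs_sub_comm]; ring
      exact normS_le xt (opNorm Emp) hopE hQ _ (κ * Cρ) (by positivity) (w.2 - w'.2) hc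
  · -- (ii) Lipschitzness in the measure
    intro w μ μ' hμ hμ' hIμ hIμ' Γ hΓ hfst hsnd hW
    haveI := hμ; haveI := hμ'; haveI := hΓ
    -- key estimate on the difference of predictions
    have hyd : ∀ i,
        |(∫ v, (φ (dotp v.1 (xt i)) - φ (dotp v.2 (xt i))) ∂μ)
          - (∫ v, (φ (dotp v.1 (xt i)) - φ (dotp v.2 (xt i))) ∂μ')|
        ≤ ∫ p, (|dotp (p.1.1 - p.2.1) (xt i)| + |dotp (p.1.2 - p.2.2) (xt i)|) ∂Γ := by
      intro i
      set f : (Fin (d+1) → ℝ) × (Fin (d+1) → ℝ) → ℝ :=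
        fun v => φ (dotp v.1 (xt i)) - φ (dotp v.2 (xt i)) with hf
      have hfc : Continuous f :=
        (hφdiff.continuous.comp ((cont_dotp (xt i)).comp continuous_fst)).sub
          (hφdiff.continuous.comp ((cont_dotp (xt i)).comp continuous_snd))
      have e1 : ∫ v, f v ∂μ = ∫ p, f p.1 ∂Γ := by
        rw [← hfst, integral_map measurable_fst.aemeasurable hfc.aestronglyMeasurable]
      have e2 : ∫ v, f v ∂μ' = ∫ p, f p.2 ∂Γ := by
        rw [← hsnd, integral_map measurable_snd.aemeasurable hfc.aestronglyMeasurable]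
      have hI1 : Integrable (fun p => f p.1) Γ := by
        have h := hIμ i
        rw [← hfst] at h
        exact (integrable_map_measure hfc.aestronglyMeasurable
          measurable_fst.aemeasurable).mp h
      have hI2 : Integrable (fun p => f p.2) Γ := by
        have h := hIμ' i
        rw [← hsnd] at h
        exact (integrable_map_measure hfc.aestronglyMeasurable
          measurable_snd.aemeasurable).mp h
      have hsub : (∫ v, f v ∂μ) - (∫ v, f v ∂μ') = ∫ p, (f p.1 - f p.2) ∂Γ := by
        rw [e1, e2, integral_sub hI1 hI2]
      rw [hsub]
      have hpt : ∀ p : ((Fin (d+1) → ℝ) × (Fin (d+1) → ℝ)) ×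
          ((Fin (d+1) → ℝ) × (Fin (d+1) → ℝ)),
          |f p.1 - f p.2| ≤ |dotp (p.1.1 - p.2.1) (xt i)| + |dotp (p.1.2 - p.2.2) (xt i)| := by
        intro p
        have l1 : |φ (dotp p.1.1 (xt i)) - φ (dotp p.2.1 (xt i))|
            ≤ |dotp (p.1.1 - p.2.1) (xt i)| := by
          rw [dotp_sub_left]
          simpa using hφlip (dotp p.1.1 (xt i)) (dotp p.2.1 (xt i))
        have l2 : |φ (dotp p.1.2 (xt i)) - φ (dotp p.2.2 (xt i))|
            ≤ |dotp (p.1.2 - p.2.2) (xt i)| := by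
          rw [dotp_sub_left]
          simpa using hφlip (dotp p.1.2 (xt i)) (dotp p.2.2 (xt i))
        have e : f p.1 - f p.2 = (φ (dotp p.1.1 (xt i)) - φ (dotp p.2.1 (xt i)))
            - (φ (dotp p.1.2 (xt i)) - φ (dotp p.2.2 (xt i))) := by
          rw [hf]; ring
        rw [e]
        calc |(φ (dotp p.1.1 (xt i)) - φ (dotp p.2.1 (xt i)))
              - (φ (dotp p.1.2 (xt i)) - φ (dotp p.2.2 (xt i)))|
            ≤ |φ (dotp p.1.1 (xt i)) - φ (dotp p.2.1 (xt i))|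
              + |φ (dotp p.1.2 (xt i)) - φ (dotp p.2.2 (xt i))| := abs_sub _ _
          _ ≤ |dotp (p.1.1 - p.2.1) (xt i)| + |dotp (p.1.2 - p.2.2) (xt i)| := add_le_add l1 l2
      calc |∫ p, (f p.1 - f p.2) ∂Γ| ≤ ∫ p, |f p.1 - f p.2| ∂Γ := by
            simpa [Real.norm_eq_abs] using
              norm_integral_le_integral_norm (μ := Γ) (fun p => f p.1 - f p.2)
        _ ≤ ∫ p, (|dotp (p.1.1 - p.2.1) (xt i)| + |dotp (p.1.2 - p.2.2) (xt i)|) ∂Γ :=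
            integral_mono (hI1.sub hI2).abs (integrable_pair_dot (xt i) Γ hW)
              fun p => hpt p
    simp only [hG]
    rw [pair_sub_eq]
    have hM0 : (0:ℝ) ≤ Real.sqrt 2 * C'ρ * opNorm Emp *
        Real.sqrt (∫ p, (vnormSq (p.1.1 - p.2.1) + vnormSq (p.1.2 - p.2.2)) ∂Γ) := by
      positivity
    have hcgen : ∀ (u : Fin (d+1) → ℝ) (i : Fin n),
        |deriv ρ ((∫ v, (φ (dotp v.1 (xt i)) - φ (dotp v.2 (xt i))) ∂μ) - y i) *
            deriv φ (dotp u (xt i)) -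
          deriv ρ ((∫ v, (φ (dotp v.1 (xt i)) - φ (dotp v.2 (xt i))) ∂μ') - y i) *
            deriv φ (dotp u (xt i))|
        ≤ C'ρ * ∫ p, (|dotp (p.1.1 - p.2.1) (xt i)| + |dotp (p.1.2 - p.2.2) (xt i)|) ∂Γ :=
      by
      intro u i
      rw [← sub_mul, abs_mul]
      have hd : |deriv ρ ((∫ v, (φ (dotp v.1 (xt i)) - φ (dotp v.2 (xt i))) ∂μ) - y i) -
          deriv ρ ((∫ v, (φ (dotp v.1 (xt i)) - φ (dotp v.2 (xt i))) ∂μ') - y i)|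
          ≤ C'ρ * |(∫ v, (φ (dotp v.1 (xt i)) - φ (dotp v.2 (xt i))) ∂μ) -
              (∫ v, (φ (dotp v.1 (xt i)) - φ (dotp v.2 (xt i))) ∂μ')| := by
        have h := hρ'lip ((∫ v, (φ (dotp v.1 (xt i)) - φ (dotp v.2 (xt i))) ∂μ) - y i)
          ((∫ v, (φ (dotp v.1 (xt i)) - φ (dotp v.2 (xt i))) ∂μ') - y i)
        rwa [sub_sub_sub_cancel_right] at h
      calc |deriv ρ ((∫ v, (φ (dotp v.1 (xt i)) - φ (dotp v.2 (xt i))) ∂μ) - y i) -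
            deriv ρ ((∫ v, (φ (dotp v.1 (xt i)) - φ (dotp v.2 (xt i))) ∂μ') - y i)| *
            |deriv φ (dotp u (xt i))|
          ≤ (C'ρ * |(∫ v, (φ (dotp v.1 (xt i)) - φ (dotp v.2 (xt i))) ∂μ) -
              (∫ v, (φ (dotp v.1 (xt i)) - φ (dotp v.2 (xt i))) ∂μ')|) * 1 :=
            mul_le_mul hd (hφd1 _) (abs_nonneg _) (by positivity)
        _ = C'ρ * |(∫ v, (φ (dotp v.1 (xt i)) - φ (dotp v.2 (xt i))) ∂μ) -
              (∫ v, (φ (dotp v.1 (xt i)) - φ (dotp v.2 (xt i))) ∂μ')| := mul_one _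
        _ ≤ C'ρ * ∫ p, (|dotp (p.1.1 - p.2.1) (xt i)| + |dotp (p.1.2 - p.2.2) (xt i)|) ∂Γ :=
            mul_le_mul_of_nonneg_left (hyd i) hC'ρ
    set I := ∫ p, (vnormSq (p.1.1 - p.2.1) + vnormSq (p.1.2 - p.2.2)) ∂Γ with hI
    have hM0 : (0:ℝ) ≤ Real.sqrt 2 * C'ρ * opNorm Emp * Real.sqrt I := by positivity
    refine le_trans (pnorm_le_two _ (Real.sqrt 2 * C'ρ * opNorm Emp * Real.sqrt I) hM0 ?_ ?_) ?_
    · exact normS_le_meas xt (opNorm Emp) hopE hQ Γ hW _ C'ρ hC'ρ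
        (fun i => hcgen w.1 i)
    · refine normS_le_meas xt (opNorm Emp) hopE hQ Γ hW _ C'ρ hC'ρ ?_
      intro i
      rw [abs_sub_comm]
      exact hcgen w.2 i
    · have h2 : Real.sqrt 2 * Real.sqrt 2 = 2 := Real.mul_self_sqrt (by norm_num)
      refine le_of_eq ?_
      linear_combination (C'ρ * opNorm Emp * Real.sqrt I) * h2
end
end

section
/- Let (x, y) be a random pair in ℝ^d × ℝ with E[‖x‖²] < ∞ and E[y²] < ∞, let Σ = E[x x^⊤], let φ : ℝ → ℝ be differentiable with bounded derivative, and let μ be a probability measure on the unit sphere S^{d−1} with predictor ŷ(x;μ) = ∫ φ(⟨w, x⟩) dμ(w). Let ρ : ℝ → ℝ be C_ρ-Lipschitz with ρ(0) = 0 and ρ ≥ 0. Then for every truncation level κ̄ > 0, the population risk R(μ) = E[ρ(ŷ(x;μ) − y)] and its truncation R^{κ̄}(μ) = E[min(ρ(ŷ(x;μ) − y), κ̄)] satisfy R(μ) − R^{κ̄}(μ) ≤ 2 C_ρ² ( 2 φ(0)² + 2 ‖φ'‖_∞² ‖Σ‖ + E[y²] ) / κ̄. -/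
open MeasureTheory Real RealInnerProductSpace

noncomputable section

/-- Jensen/Cauchy–Schwarz: for a probability measure, `(∫ h)² ≤ ∫ h²`. -/
lemma jensen_sq {α : Type*} [MeasurableSpace α] (ν : Measure α) [IsProbabilityMeasure ν]
    (h : α → ℝ) (h1 : Integrable h ν) (h2 : Integrable (fun a => h a ^ 2) ν) :
    (∫ a, h a ∂ν) ^ 2 ≤ ∫ a, h a ^ 2 ∂ν := by
  set m := ∫ a, h a ∂ν with hm
  have h0 : 0 ≤ ∫ a, (h a - m) ^ 2 ∂ν := integral_nonneg fun a => sq_nonneg _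
  have hrw : (fun a => (h a - m) ^ 2) = fun a => (h a ^ 2 - 2 * m * h a) + m ^ 2 := by
    funext a; ring
  have hint1 : Integrable (fun a => h a ^ 2 - 2 * m * h a) ν := h2.sub (h1.const_mul (2 * m))
  have hint2 : Integrable (fun a => 2 * m * h a) ν := h1.const_mul (2 * m)
  rw [hrw, integral_add hint1 (integrable_const _),
    integral_sub h2 hint2, integral_const_mul, integral_const,
    probReal_univ] at h0
  simp only [ENNReal.toReal_one, smul_eq_mul, one_mul, ← hm] at h0
  nlinarith [h0]

set_option maxHeartbeats 1600000 in
/-- Lemma: effect of truncating the loss, Riemannian setting: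
`R(μ) − R^κ̄(μ) ≤ 2 C_ρ² (2 φ(0)² + 2 ‖φ'‖_∞² ‖Σ‖ + E[y²]) / κ̄`. -/
theorem stmt19
    (d : ℕ) (hd : 1 ≤ d)
    {Ω : Type*} [MeasurableSpace Ω] (P : Measure Ω) [IsProbabilityMeasure P]
    (x : Ω → EuclideanSpace ℝ (Fin d)) (y : Ω → ℝ)
    (hx : Measurable x) (hy : Measurable y)
    (hx2 : Integrable (fun ω => ‖x ω‖ ^ 2) P)
    (hy2 : Integrable (fun ω => (y ω) ^ 2) P)
    -- the second moment matrix `Σ = E[x xᵀ]`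
    (Sig : Matrix (Fin d) (Fin d) ℝ)
    (hSig : Sig = Matrix.of fun a b => ∫ ω, x ω a * x ω b ∂P)
    -- `φ` differentiable with bounded derivative
    (φ : ℝ → ℝ) (hφdiff : Differentiable ℝ φ) (B : ℝ) (hφ' : ∀ t, |deriv φ t| ≤ B)
    -- a probability measure on the unit sphere defining the predictor
    (μ : Measure (Metric.sphere (0 : EuclideanSpace ℝ (Fin d)) 1)) [IsProbabilityMeasure μ]
    -- the loss: `C_ρ`-Lipschitz, nonnegative, vanishing at zero
    (ρ : ℝ → ℝ) (Cρ : ℝ) (hCρ : 0 ≤ Cρ)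
    (hρlip : ∀ s t : ℝ, |ρ s - ρ t| ≤ Cρ * |s - t|)
    (hρ0 : ρ 0 = 0) (hρpos : ∀ t, 0 ≤ ρ t)
    (κb : ℝ) (hκb : 0 < κb) :
    (∫ ω, ρ ((∫ w, φ ⟪(w : EuclideanSpace ℝ (Fin d)), x ω⟫ ∂μ) - y ω) ∂P) -
      (∫ ω, min (ρ ((∫ w, φ ⟪(w : EuclideanSpace ℝ (Fin d)), x ω⟫ ∂μ) - y ω)) κb ∂P) ≤
    2 * Cρ ^ 2 * (2 * φ 0 ^ 2 + 2 * (⨆ t, |deriv φ t|) ^ 2 * opNorm Sig +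
      ∫ ω, (y ω) ^ 2 ∂P) / κb := by
  classical
  set B' : ℝ := ⨆ t, |deriv φ t| with hB'def
  have hBdd : BddAbove (Set.range fun t => |deriv φ t|) := ⟨B, by rintro _ ⟨t, rfl⟩; exact hφ' t⟩
  have hB' : ∀ t, |deriv φ t| ≤ B' := fun t => le_ciSup hBdd t
  have hB'0 : 0 ≤ B' := (abs_nonneg _).trans (hB' 0)
  have hφlip : LipschitzWith B'.toNNReal φ := by
    apply lipschitzWith_of_nnnorm_deriv_le hφdiff
    intro t
    rw [← NNReal.coe_le_coe, coe_nnnorm, Real.coe_toNNReal _ hB'0]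
    exact hB' t
  have hφabs : ∀ t : ℝ, |φ t - φ 0| ≤ B' * |t| := by
    intro t
    have h := hφlip.dist_le_mul t 0
    rw [Real.coe_toNNReal _ hB'0] at h
    simpa [Real.dist_eq] using h
  have hφsq : ∀ t : ℝ, φ t ^ 2 ≤ 2 * φ 0 ^ 2 + 2 * B' ^ 2 * t ^ 2 := by
    intro t
    have h1 := hφabs t
    have h2 : (φ t - φ 0) ^ 2 ≤ (B' * |t|) ^ 2 := by
      nlinarith [abs_nonneg (φ t - φ 0), sq_abs (φ t - φ 0)]
    nlinarith [sq_abs t, sq_nonneg (φ t - 2 * φ 0)]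
  have hwnorm : ∀ w : Metric.sphere (0 : EuclideanSpace ℝ (Fin d)) 1,
      ‖(w : EuclideanSpace ℝ (Fin d))‖ = 1 := fun w => by
    simpa using mem_sphere_zero_iff_norm.mp w.2
  have hinnerle : ∀ (w : Metric.sphere (0 : EuclideanSpace ℝ (Fin d)) 1) (ω : Ω),
      |⟪(w : EuclideanSpace ℝ (Fin d)), x ω⟫| ≤ ‖x ω‖ := by
    intro w ω
    calc |⟪(w : EuclideanSpace ℝ (Fin d)), x ω⟫|
        ≤ ‖(w : EuclideanSpace ℝ (Fin d))‖ * ‖x ω‖ := abs_real_inner_le_norm _ _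
      _ = ‖x ω‖ := by rw [hwnorm w, one_mul]
  -- measurability of the joint map
  have hinnerMeas : Measurable fun p : Ω × Metric.sphere (0 : EuclideanSpace ℝ (Fin d)) 1 =>
      ⟪((p.2 : EuclideanSpace ℝ (Fin d))), x p.1⟫ :=
    Measurable.inner (measurable_subtype_coe.comp measurable_snd) (hx.comp measurable_fst)
  have hFmeas : StronglyMeasurable fun p : Ω × Metric.sphere (0 : EuclideanSpace ℝ (Fin d)) 1 =>
      φ ⟪((p.2 : EuclideanSpace ℝ (Fin d))), x p.1⟫ :=
    (hφdiff.continuous.measurable.comp hinnerMeas).stronglyMeasurable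
  have hF2meas : StronglyMeasurable fun p : Ω × Metric.sphere (0 : EuclideanSpace ℝ (Fin d)) 1 =>
      (φ ⟪((p.2 : EuclideanSpace ℝ (Fin d))), x p.1⟫) ^ 2 :=
    (((hφdiff.continuous.measurable.comp hinnerMeas)).pow_const 2).stronglyMeasurable
  set g : Ω → ℝ := fun ω => ∫ w, φ ⟪(w : EuclideanSpace ℝ (Fin d)), x ω⟫ ∂μ with hgdef
  have hgmeas : StronglyMeasurable g := hFmeas.integral_prod_right'
  -- pointwise bounds
  have hφpt : ∀ (ω : Ω) (w : Metric.sphere (0 : EuclideanSpace ℝ (Fin d)) 1),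
      |φ ⟪(w : EuclideanSpace ℝ (Fin d)), x ω⟫| ≤ |φ 0| + B' * ‖x ω‖ := by
    intro ω w
    have h1 := hφabs ⟪(w : EuclideanSpace ℝ (Fin d)), x ω⟫
    have h2 := hinnerle w ω
    have h3 : |φ ⟪(w : EuclideanSpace ℝ (Fin d)), x ω⟫| - |φ 0| ≤
        |φ ⟪(w : EuclideanSpace ℝ (Fin d)), x ω⟫ - φ 0| := abs_sub_abs_le_abs_sub _ _
    nlinarith [mul_le_mul_of_nonneg_left h2 hB'0]
  have hφpt2 : ∀ (ω : Ω) (w : Metric.sphere (0 : EuclideanSpace ℝ (Fin d)) 1),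
      (φ ⟪(w : EuclideanSpace ℝ (Fin d)), x ω⟫) ^ 2 ≤ 2 * φ 0 ^ 2 + 2 * B' ^ 2 * ‖x ω‖ ^ 2 := by
    intro ω w
    have h1 := hφsq ⟪(w : EuclideanSpace ℝ (Fin d)), x ω⟫
    have h2 : (⟪(w : EuclideanSpace ℝ (Fin d)), x ω⟫) ^ 2 ≤ ‖x ω‖ ^ 2 := by
      nlinarith [hinnerle w ω, abs_nonneg ⟪(w : EuclideanSpace ℝ (Fin d)), x ω⟫,
        sq_abs ⟪(w : EuclideanSpace ℝ (Fin d)), x ω⟫]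
    nlinarith [sq_nonneg B']
  -- integrability over μ for fixed ω
  have hcontw : ∀ ω : Ω, Continuous fun w : Metric.sphere (0 : EuclideanSpace ℝ (Fin d)) 1 =>
      φ ⟪(w : EuclideanSpace ℝ (Fin d)), x ω⟫ :=
    fun ω => hφdiff.continuous.comp (Continuous.inner continuous_subtype_val continuous_const)
  have hφx_int : ∀ ω : Ω, Integrable
      (fun w : Metric.sphere (0 : EuclideanSpace ℝ (Fin d)) 1 =>
        φ ⟪(w : EuclideanSpace ℝ (Fin d)), x ω⟫) μ := by
    intro ω
    refine (integrable_const (|φ 0| + B' * ‖x ω‖)).mono'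
      (hcontw ω).aestronglyMeasurable (Filter.Eventually.of_forall fun w => ?_)
    simpa [Real.norm_eq_abs] using hφpt ω w
  have hφx2_int : ∀ ω : Ω, Integrable
      (fun w : Metric.sphere (0 : EuclideanSpace ℝ (Fin d)) 1 =>
        (φ ⟪(w : EuclideanSpace ℝ (Fin d)), x ω⟫) ^ 2) μ := by
    intro ω
    refine (integrable_const (2 * φ 0 ^ 2 + 2 * B' ^ 2 * ‖x ω‖ ^ 2)).mono'
      ((hcontw ω).pow 2).aestronglyMeasurable (Filter.Eventually.of_forall fun w => ?_)
    have := hφpt2 ω w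
    rw [Real.norm_eq_abs, abs_of_nonneg (sq_nonneg _)]
    exact this
  -- bounds for g
  have hgbound : ∀ ω, |g ω| ≤ |φ 0| + B' * ‖x ω‖ := by
    intro ω
    calc |g ω| ≤ ∫ w, ‖φ ⟪(w : EuclideanSpace ℝ (Fin d)), x ω⟫‖ ∂μ := by
          simpa [Real.norm_eq_abs] using norm_integral_le_integral_norm
            (fun w : Metric.sphere (0 : EuclideanSpace ℝ (Fin d)) 1 =>
              φ ⟪(w : EuclideanSpace ℝ (Fin d)), x ω⟫)
      _ ≤ ∫ _w, (|φ 0| + B' * ‖x ω‖) ∂μ := by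
          refine integral_mono (hφx_int ω).norm (integrable_const _) fun w => ?_
          simpa [Real.norm_eq_abs] using hφpt ω w
      _ = |φ 0| + B' * ‖x ω‖ := by simp
  have hg2bound : ∀ ω, g ω ^ 2 ≤ 2 * φ 0 ^ 2 + 2 * B' ^ 2 * ‖x ω‖ ^ 2 := by
    intro ω
    have h := hgbound ω
    nlinarith [abs_nonneg (g ω), sq_abs (g ω), norm_nonneg (x ω), abs_nonneg (φ 0),
      sq_abs (φ 0), mul_nonneg hB'0 (norm_nonneg (x ω)), sq_nonneg (|φ 0| - B' * ‖x ω‖)]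
  -- integrability over P
  have hxdom : Integrable (fun ω => 1 + ‖x ω‖ ^ 2) P := (integrable_const (1:ℝ)).add hx2
  have hydom : Integrable (fun ω => 1 + y ω ^ 2) P := (integrable_const (1:ℝ)).add hy2
  have hxnorm_int : Integrable (fun ω => ‖x ω‖) P := by
    refine hxdom.mono' hx.norm.aestronglyMeasurable
      (Filter.Eventually.of_forall fun ω => ?_)
    rw [Real.norm_eq_abs, abs_of_nonneg (norm_nonneg _)]
    nlinarith [norm_nonneg (x ω), sq_nonneg (‖x ω‖ - 1)]
  have hynorm_int : Integrable (fun ω => |y ω|) P := by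
    refine hydom.mono' hy.abs.aestronglyMeasurable
      (Filter.Eventually.of_forall fun ω => ?_)
    rw [Real.norm_eq_abs, abs_abs]
    nlinarith [abs_nonneg (y ω), sq_abs (y ω), sq_nonneg (|y ω| - 1)]
  have hdom2 : Integrable (fun ω => 2 * φ 0 ^ 2 + 2 * B' ^ 2 * ‖x ω‖ ^ 2) P :=
    (integrable_const (2 * φ 0 ^ 2)).add (hx2.const_mul (2 * B' ^ 2))
  have hg2_int : Integrable (fun ω => g ω ^ 2) P := by
    refine hdom2.mono' ((hgmeas.measurable.pow_const 2).aestronglyMeasurable)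
      (Filter.Eventually.of_forall fun ω => ?_)
    rw [Real.norm_eq_abs, abs_of_nonneg (sq_nonneg _)]
    exact hg2bound ω
  -- the loss
  set f : Ω → ℝ := fun ω => ρ (g ω - y ω) with hfdef
  have hρcont : Continuous ρ := by
    have : LipschitzWith Cρ.toNNReal ρ := LipschitzWith.of_dist_le_mul fun s t => by
      rw [Real.coe_toNNReal _ hCρ, Real.dist_eq, Real.dist_eq]
      exact hρlip s t
    exact this.continuous
  have hfmeas : StronglyMeasurable f :=
    (hρcont.measurable.comp (hgmeas.measurable.sub hy)).stronglyMeasurable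
  have hflip : ∀ ω, f ω ≤ Cρ * |g ω - y ω| := by
    intro ω
    have h1 := hρlip (g ω - y ω) 0
    rw [hρ0, sub_zero, sub_zero] at h1
    exact (le_abs_self _).trans h1
  have hfdom : Integrable (fun ω => Cρ * ((|φ 0| + B' * ‖x ω‖) + |y ω|)) P :=
    (((integrable_const (|φ 0| : ℝ)).add (hxnorm_int.const_mul B')).add
      hynorm_int).const_mul Cρ
  have hf_int : Integrable f P := by
    refine hfdom.mono' hfmeas.aestronglyMeasurable
      (Filter.Eventually.of_forall fun ω => ?_)
    rw [Real.norm_eq_abs, abs_of_nonneg (hρpos _)]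
    have h1 := hflip ω
    have h2 : |g ω - y ω| ≤ |g ω| + |y ω| := abs_sub _ _
    have h3 := hgbound ω
    have h4 : Cρ * |g ω - y ω| ≤ Cρ * ((|φ 0| + B' * ‖x ω‖) + |y ω|) := by
      apply mul_le_mul_of_nonneg_left _ hCρ
      linarith
    exact h1.trans (by linarith)
  have hmin_int : Integrable (fun ω => min (f ω) κb) P := by
    refine hf_int.mono' (hfmeas.measurable.min measurable_const).aestronglyMeasurable
      (Filter.Eventually.of_forall fun ω => ?_)
    rw [Real.norm_eq_abs, abs_of_nonneg (le_min (hρpos _) hκb.le)]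
    exact min_le_left _ _
  -- pointwise truncation bound
  have hkey : ∀ ω, f ω - min (f ω) κb ≤ 2 * Cρ ^ 2 * (g ω ^ 2 + y ω ^ 2) / κb := by
    intro ω
    have hf0 : 0 ≤ f ω := hρpos _
    have hfsq : f ω ^ 2 ≤ 2 * Cρ ^ 2 * (g ω ^ 2 + y ω ^ 2) := by
      have h1 := hflip ω
      nlinarith [sq_abs (g ω - y ω), sq_nonneg (g ω + y ω), sq_nonneg (g ω - y ω),
        mul_nonneg hCρ (abs_nonneg (g ω - y ω)), hf0, sq_nonneg Cρ,
        mul_nonneg (mul_nonneg hCρ hCρ) (sq_nonneg (g ω + y ω))]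
    rcases le_total (f ω) κb with h | h
    · rw [min_eq_left h, sub_self]
      have hnum : (0:ℝ) ≤ 2 * Cρ ^ 2 * (g ω ^ 2 + y ω ^ 2) := by positivity
      exact div_nonneg hnum hκb.le
    · rw [min_eq_right h, le_div_iff₀ hκb]
      nlinarith
  -- integrability of inner products squared
  have hxcomp : ∀ (v : EuclideanSpace ℝ (Fin d)) (a : Fin d), |v a| ≤ ‖v‖ := by
    intro v a
    have h1 : ‖v‖ ^ 2 = ∑ i, (v i) ^ 2 := by
      rw [EuclideanSpace.norm_eq, Real.sq_sqrt (Finset.sum_nonneg fun i _ => sq_nonneg _)]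
      simp [Real.norm_eq_abs, sq_abs]
    have h2 : (v a) ^ 2 ≤ ‖v‖ ^ 2 := by
      rw [h1]
      exact Finset.single_le_sum (f := fun i => (v i) ^ 2) (fun i _ => sq_nonneg _)
        (Finset.mem_univ a)
    nlinarith [abs_nonneg (v a), norm_nonneg v, sq_abs (v a)]
  have hxab_int : ∀ a b : Fin d, Integrable (fun ω => x ω a * x ω b) P := by
    intro a b
    have hma : Measurable fun ω => x ω a := by
      have : Continuous fun v : EuclideanSpace ℝ (Fin d) => v a :=
        (EuclideanSpace.proj a).continuous
      exact this.measurable.comp hx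
    have hmb : Measurable fun ω => x ω b := by
      have : Continuous fun v : EuclideanSpace ℝ (Fin d) => v b :=
        (EuclideanSpace.proj b).continuous
      exact this.measurable.comp hx
    refine hx2.mono' (hma.mul hmb).aestronglyMeasurable
      (Filter.Eventually.of_forall fun ω => ?_)
    rw [Real.norm_eq_abs, abs_mul]
    calc |x ω a| * |x ω b| ≤ ‖x ω‖ * ‖x ω‖ :=
          mul_le_mul (hxcomp _ a) (hxcomp _ b) (abs_nonneg _) (norm_nonneg _)
      _ = ‖x ω‖ ^ 2 := (sq (‖x ω‖)).symm ▸ by ring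
  have hinnersq_int : ∀ w : Metric.sphere (0 : EuclideanSpace ℝ (Fin d)) 1,
      Integrable (fun ω => (⟪(w : EuclideanSpace ℝ (Fin d)), x ω⟫) ^ 2) P := by
    intro w
    refine hx2.mono' (((Measurable.inner measurable_const hx).pow_const 2).aestronglyMeasurable)
      (Filter.Eventually.of_forall fun ω => ?_)
    rw [Real.norm_eq_abs, abs_of_nonneg (sq_nonneg _)]
    nlinarith [hinnerle w ω, abs_nonneg ⟪(w : EuclideanSpace ℝ (Fin d)), x ω⟫,
      sq_abs ⟪(w : EuclideanSpace ℝ (Fin d)), x ω⟫]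
  -- quadratic form bound
  have hqform : ∀ w : Metric.sphere (0 : EuclideanSpace ℝ (Fin d)) 1,
      ∫ ω, (⟪(w : EuclideanSpace ℝ (Fin d)), x ω⟫) ^ 2 ∂P ≤ opNorm Sig := by
    intro w
    set v : EuclideanSpace ℝ (Fin d) := (w : EuclideanSpace ℝ (Fin d)) with hv
    have hinner_eq : ∀ ω, ⟪v, x ω⟫ = ∑ a, v a * x ω a := by
      intro ω
      simp [PiLp.inner_apply, RCLike.inner_apply, conj_trivial, mul_comm]
    have expand : ∀ ω, (⟪v, x ω⟫) ^ 2 = ∑ a, ∑ b, v a * v b * (x ω a * x ω b) := by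
      intro ω
      calc (⟪v, x ω⟫) ^ 2 = (∑ a, v a * x ω a) * (∑ b, v b * x ω b) := by
            rw [hinner_eq, sq]
        _ = ∑ a, ∑ b, (v a * x ω a) * (v b * x ω b) := Finset.sum_mul_sum _ _ _ _
        _ = ∑ a, ∑ b, v a * v b * (x ω a * x ω b) :=
            Finset.sum_congr rfl fun a _ => Finset.sum_congr rfl fun b _ => by ring
    have hint_eq : ∫ ω, (⟪v, x ω⟫) ^ 2 ∂P = ∑ a, ∑ b, v a * v b * Sig a b := by
      simp_rw [expand]
      rw [integral_finset_sum _ (fun a _ =>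
        integrable_finset_sum _ (fun b _ => (hxab_int a b).const_mul _))]
      refine Finset.sum_congr rfl fun a _ => ?_
      rw [integral_finset_sum _ (fun b _ => (hxab_int a b).const_mul _)]
      refine Finset.sum_congr rfl fun b _ => ?_
      rw [integral_const_mul, hSig]
      rfl
    have hform : ∑ a, ∑ b, v a * v b * Sig a b = ⟪v, Matrix.toEuclideanLin Sig v⟫ := by
      simp only [PiLp.inner_apply, RCLike.inner_apply, conj_trivial,
        Matrix.toEuclideanLin_apply, WithLp.ofLp_toLp, Matrix.mulVec,
        dotProduct, Finset.mul_sum, Finset.sum_mul]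
      refine Finset.sum_congr rfl fun a _ => Finset.sum_congr rfl fun b _ => by
        ring
    have hnv : ‖v‖ = 1 := hwnorm w
    have hle : ⟪v, Matrix.toEuclideanLin Sig v⟫ ≤ opNorm Sig := by
      have h1 : ⟪v, Matrix.toEuclideanLin Sig v⟫ ≤ ‖v‖ * ‖Matrix.toEuclideanLin Sig v‖ :=
        real_inner_le_norm _ _
      have h2 : ‖Matrix.toEuclideanLin Sig v‖ ≤ opNorm Sig * ‖v‖ :=
        (LinearMap.toContinuousLinearMap (Matrix.toEuclideanLin Sig)).le_opNorm v
      rw [hnv] at h1 h2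
      simpa using h1.trans (by simpa using h2)
    rw [hint_eq, hform]
    exact hle
  -- per-w second moment bound
  have hperw : ∀ w : Metric.sphere (0 : EuclideanSpace ℝ (Fin d)) 1,
      ∫ ω, (φ ⟪(w : EuclideanSpace ℝ (Fin d)), x ω⟫) ^ 2 ∂P ≤
        2 * φ 0 ^ 2 + 2 * B' ^ 2 * opNorm Sig := by
    intro w
    have hφw_int : Integrable (fun ω => (φ ⟪(w : EuclideanSpace ℝ (Fin d)), x ω⟫) ^ 2) P := by
      refine hdom2.mono'
        (((hφdiff.continuous.measurable.comp (Measurable.inner measurable_const hx)).pow_const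
          2).aestronglyMeasurable) (Filter.Eventually.of_forall fun ω => ?_)
      rw [Real.norm_eq_abs, abs_of_nonneg (sq_nonneg _)]
      exact hφpt2 ω w
    calc ∫ ω, (φ ⟪(w : EuclideanSpace ℝ (Fin d)), x ω⟫) ^ 2 ∂P
        ≤ ∫ ω, (2 * φ 0 ^ 2 + 2 * B' ^ 2 * (⟪(w : EuclideanSpace ℝ (Fin d)), x ω⟫) ^ 2) ∂P := by
          have hint : Integrable
              (fun ω => 2 * φ 0 ^ 2 + 2 * B' ^ 2 * (⟪(w : EuclideanSpace ℝ (Fin d)), x ω⟫) ^ 2)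
              P := (integrable_const (2 * φ 0 ^ 2)).add ((hinnersq_int w).const_mul (2 * B' ^ 2))
          refine integral_mono hφw_int hint fun ω => ?_
          exact hφsq _
      _ = 2 * φ 0 ^ 2 + 2 * B' ^ 2 * ∫ ω, (⟪(w : EuclideanSpace ℝ (Fin d)), x ω⟫) ^ 2 ∂P := by
          rw [integral_add (integrable_const (2 * φ 0 ^ 2))
            ((hinnersq_int w).const_mul (2 * B' ^ 2)), integral_const, probReal_univ,
            integral_const_mul]
          simp
      _ ≤ 2 * φ 0 ^ 2 + 2 * B' ^ 2 * opNorm Sig := by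
          have := mul_le_mul_of_nonneg_left (hqform w) (by positivity : (0:ℝ) ≤ 2 * B' ^ 2)
          linarith
  -- Fubini
  have hF2prod_int : Integrable
      (fun p : Ω × Metric.sphere (0 : EuclideanSpace ℝ (Fin d)) 1 =>
        (φ ⟪((p.2 : EuclideanSpace ℝ (Fin d))), x p.1⟫) ^ 2) (P.prod μ) := by
    refine (integrable_prod_iff hF2meas.aestronglyMeasurable).mpr
      ⟨Filter.Eventually.of_forall fun ω => hφx2_int ω, ?_⟩
    simp only [Real.norm_eq_abs, abs_pow, sq_abs]
    refine hdom2.mono' hF2meas.integral_prod_right'.aestronglyMeasurable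
      (Filter.Eventually.of_forall fun ω => ?_)
    rw [Real.norm_eq_abs, abs_of_nonneg (integral_nonneg fun w => sq_nonneg _)]
    calc (∫ w, (φ ⟪(w : EuclideanSpace ℝ (Fin d)), x ω⟫) ^ 2 ∂μ)
        ≤ ∫ _w, (2 * φ 0 ^ 2 + 2 * B' ^ 2 * ‖x ω‖ ^ 2) ∂μ :=
          integral_mono (hφx2_int ω) (integrable_const _) fun w => hφpt2 ω w
      _ = 2 * φ 0 ^ 2 + 2 * B' ^ 2 * ‖x ω‖ ^ 2 := by simp
  have hsqint_P : Integrable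
      (fun ω => ∫ w, (φ ⟪(w : EuclideanSpace ℝ (Fin d)), x ω⟫) ^ 2 ∂μ) P := by
    refine hdom2.mono' hF2meas.integral_prod_right'.aestronglyMeasurable
      (Filter.Eventually.of_forall fun ω => ?_)
    rw [Real.norm_eq_abs, abs_of_nonneg (integral_nonneg fun w => sq_nonneg _)]
    calc (∫ w, (φ ⟪(w : EuclideanSpace ℝ (Fin d)), x ω⟫) ^ 2 ∂μ)
        ≤ ∫ _w, (2 * φ 0 ^ 2 + 2 * B' ^ 2 * ‖x ω‖ ^ 2) ∂μ :=
          integral_mono (hφx2_int ω) (integrable_const _) fun w => hφpt2 ω w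
      _ = 2 * φ 0 ^ 2 + 2 * B' ^ 2 * ‖x ω‖ ^ 2 := by simp
  have hswap : ∫ ω, (∫ w, (φ ⟪(w : EuclideanSpace ℝ (Fin d)), x ω⟫) ^ 2 ∂μ) ∂P =
      ∫ w, (∫ ω, (φ ⟪(w : EuclideanSpace ℝ (Fin d)), x ω⟫) ^ 2 ∂P) ∂μ :=
    integral_integral_swap hF2prod_int
  -- the second moment of g
  have hI1 : ∫ ω, g ω ^ 2 ∂P ≤ 2 * φ 0 ^ 2 + 2 * B' ^ 2 * opNorm Sig := by
    calc ∫ ω, g ω ^ 2 ∂P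
        ≤ ∫ ω, (∫ w, (φ ⟪(w : EuclideanSpace ℝ (Fin d)), x ω⟫) ^ 2 ∂μ) ∂P := by
          refine integral_mono hg2_int hsqint_P fun ω => ?_
          exact jensen_sq μ _ (hφx_int ω) (hφx2_int ω)
      _ = ∫ w, (∫ ω, (φ ⟪(w : EuclideanSpace ℝ (Fin d)), x ω⟫) ^ 2 ∂P) ∂μ := hswap
      _ ≤ ∫ _w, (2 * φ 0 ^ 2 + 2 * B' ^ 2 * opNorm Sig) ∂μ := by
          refine integral_mono_of_nonneg
            (Filter.Eventually.of_forall fun w => integral_nonneg fun ω => sq_nonneg _)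
            (integrable_const _) (Filter.Eventually.of_forall fun w => hperw w)
      _ = 2 * φ 0 ^ 2 + 2 * B' ^ 2 * opNorm Sig := by simp
  -- final assembly
  have hI2 : 0 ≤ ∫ ω, y ω ^ 2 ∂P := integral_nonneg fun ω => sq_nonneg _
  show (∫ ω, f ω ∂P) - (∫ ω, min (f ω) κb ∂P) ≤
    2 * Cρ ^ 2 * (2 * φ 0 ^ 2 + 2 * B' ^ 2 * opNorm Sig + ∫ ω, y ω ^ 2 ∂P) / κb
  rw [← integral_sub hf_int hmin_int]
  calc ∫ ω, (f ω - min (f ω) κb) ∂P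
      ≤ ∫ ω, 2 * Cρ ^ 2 * (g ω ^ 2 + y ω ^ 2) / κb ∂P := by
        have hint : Integrable (fun ω => 2 * Cρ ^ 2 * (g ω ^ 2 + y ω ^ 2) / κb) P :=
          ((hg2_int.add hy2).const_mul (2 * Cρ ^ 2)).div_const κb
        exact integral_mono (hf_int.sub hmin_int) hint fun ω => hkey ω
    _ = 2 * Cρ ^ 2 * ((∫ ω, g ω ^ 2 ∂P) + ∫ ω, y ω ^ 2 ∂P) / κb := by
        rw [integral_div, integral_const_mul, integral_add hg2_int hy2]
    _ ≤ 2 * Cρ ^ 2 * (2 * φ 0 ^ 2 + 2 * B' ^ 2 * opNorm Sig + ∫ ω, y ω ^ 2 ∂P) / κb := by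
        have h1 : 2 * Cρ ^ 2 * ((∫ ω, g ω ^ 2 ∂P) + ∫ ω, y ω ^ 2 ∂P) ≤
            2 * Cρ ^ 2 * (2 * φ 0 ^ 2 + 2 * B' ^ 2 * opNorm Sig + ∫ ω, y ω ^ 2 ∂P) :=
          mul_le_mul_of_nonneg_left (by linarith) (by positivity)
        exact (div_le_div_iff_of_pos_right hκb).mpr h1
end
end
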